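/- arXiv:2502.08345 — 10 statements merged into one kernel-verified Lean document; each statement's English description precedes it below -/
import Mathlib

section
/- Branching bisimilarity is an equivalence relation on the states of a labelled transition system. -/
/-- A labelled transition system with silent action `τ` modelled as `none`. -/
structure LTS (S A : Type) where
  tr : S → Option A → S → Prop
  fin : S → Prop

/-- Zero or more τ-steps. -/
def LTS.tauStar {S A : Type} (L : LTS S A) : S → S → Prop :=
  Relation.ReflTransGen (fun s t => L.tr s none t)

/-- `s →(a) t` : either `s →a t`, or `a = τ` and `s = t`. -/
def LTS.optStep {S A : Type} (L : LTS S A) (s : S) (a : Option A) (t : S) : Prop :=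
  L.tr s a t ∨ (a = none ∧ s = t)

/-- A symmetric relation `R` is a strong bisimulation. -/
def IsStrongBisim {S A : Type} (L : LTS S A) (R : S → S → Prop) : Prop :=
  (∀ s t, R s t → R t s) ∧
  (∀ s t, R s t →
    (∀ a s', L.tr s a s' → ∃ t', L.tr t a t' ∧ R s' t') ∧
    (L.fin s → L.fin t))

/-- Strong bisimilarity: related by some strong bisimulation. -/
def Bisim {S A : Type} (L : LTS S A) (s t : S) : Prop :=
  ∃ R, IsStrongBisim L R ∧ R s t

/-- A symmetric relation `R` is a branching bisimulation. -/
def IsBranchingBisim {S A : Type} (L : LTS S A) (R : S → S → Prop) : Prop :=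
  (∀ s t, R s t → R t s) ∧
  (∀ s t, R s t →
    (∀ a s', L.tr s a s' →
      ∃ t'' t', L.tauStar t t'' ∧ L.optStep t'' a t' ∧ R s t'' ∧ R s' t') ∧
    (L.fin s → ∃ t', L.tauStar t t' ∧ L.fin t'))

/-- Branching bisimilarity: related by some branching bisimulation. -/
def BBisim {S A : Type} (L : LTS S A) (s t : S) : Prop :=
  ∃ R, IsBranchingBisim L R ∧ R s t

/-- Lifting a τ-sequence across a branching bisimulation. -/
lemma bb_lift_tauStar {S A : Type} {L : LTS S A} {R : S → S → Prop}
    (hR : IsBranchingBisim L R) {u u' t : S} (hut : R u t) (h : L.tauStar u u') :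
    ∃ t', L.tauStar t t' ∧ R u' t' := by
  induction h with
  | refl => exact ⟨t, Relation.ReflTransGen.refl, hut⟩
  | tail _ hstep ih =>
    obtain ⟨t1, ht1, hr1⟩ := ih
    obtain ⟨t'', t', hstar, hopt, _, hr'⟩ := ((hR.2 _ _ hr1).1 none _ hstep)
    rcases hopt with htr | ⟨_, heq⟩
    · exact ⟨t', (ht1.trans hstar).tail htr, hr'⟩
    · exact ⟨t', ht1.trans (heq ▸ hstar), hr'⟩

/-- Matching lemma for the composition of two branching bisimulations. -/
lemma bb_comp_match {S A : Type} {L : LTS S A} {R1 R2 : S → S → Prop}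
    (h1 : IsBranchingBisim L R1) (h2 : IsBranchingBisim L R2)
    {s u t : S} (hsu : R1 s u) (hut : R2 u t) :
    (∀ a s', L.tr s a s' →
      ∃ t'' t', L.tauStar t t'' ∧ L.optStep t'' a t' ∧
        (∃ m, R1 s m ∧ R2 m t'') ∧ (∃ m, R1 s' m ∧ R2 m t')) ∧
    (L.fin s → ∃ t', L.tauStar t t' ∧ L.fin t') := by
  constructor
  · intro a s' hstep
    obtain ⟨u'', u', hustar, huopt, hsu'', hs'u'⟩ := (h1.2 _ _ hsu).1 a s' hstep
    obtain ⟨t1, ht1, hu''t1⟩ := bb_lift_tauStar h2 hut hustar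
    rcases huopt with htr | ⟨ha, heq⟩
    · obtain ⟨t'', t', hstar, hopt, hr'', hr'⟩ := (h2.2 _ _ hu''t1).1 a u' htr
      exact ⟨t'', t', ht1.trans hstar, hopt, ⟨u'', hsu'', hr''⟩, ⟨u', hs'u', hr'⟩⟩
    · subst heq
      exact ⟨t1, t1, ht1, Or.inr ⟨ha, rfl⟩, ⟨u'', hsu'', hu''t1⟩, ⟨u'', hs'u', hu''t1⟩⟩
  · intro hfin
    obtain ⟨u', hustar, hufin⟩ := (h1.2 _ _ hsu).2 hfin
    obtain ⟨t1, ht1, hu't1⟩ := bb_lift_tauStar h2 hut hustar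
    obtain ⟨t', hstar, hfin'⟩ := (h2.2 _ _ hu't1).2 hufin
    exact ⟨t', ht1.trans hstar, hfin'⟩

/-- Branching bisimilarity is an equivalence relation on the
states of a labelled transition system. -/
theorem branching_bisimilarity_is_equivalence {S A : Type} (L : LTS S A) :
    Equivalence (BBisim L) := by
  constructor
  · -- reflexivity
    intro s
    refine ⟨Eq, ⟨fun _ _ h => h.symm, ?_⟩, rfl⟩
    intro s t h; subst h
    exact ⟨fun a s' h => ⟨s, s', Relation.ReflTransGen.refl, Or.inl h, rfl, rfl⟩,
      fun hf => ⟨s, Relation.ReflTransGen.refl, hf⟩⟩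
  · -- symmetry
    rintro s t ⟨R, hR, hst⟩
    exact ⟨R, hR, hR.1 _ _ hst⟩
  · -- transitivity
    rintro s u t ⟨R1, h1, hsu⟩ ⟨R2, h2, hut⟩
    refine ⟨fun x y => (∃ m, R1 x m ∧ R2 m y) ∨ (∃ m, R2 x m ∧ R1 m y), ⟨?_, ?_⟩,
      Or.inl ⟨u, hsu, hut⟩⟩
    · rintro x y (⟨m, hxm, hmy⟩ | ⟨m, hxm, hmy⟩)
      · exact Or.inr ⟨m, h2.1 _ _ hmy, h1.1 _ _ hxm⟩
      · exact Or.inl ⟨m, h1.1 _ _ hmy, h2.1 _ _ hxm⟩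
    · rintro x y (⟨m, hxm, hmy⟩ | ⟨m, hxm, hmy⟩)
      · obtain ⟨hstep, hfin⟩ := bb_comp_match h1 h2 hxm hmy
        refine ⟨fun a s' h => ?_, hfin⟩
        obtain ⟨t'', t', hA, hB, hC, hD⟩ := hstep a s' h
        exact ⟨t'', t', hA, hB, Or.inl hC, Or.inl hD⟩
      · obtain ⟨hstep, hfin⟩ := bb_comp_match h2 h1 hxm hmy
        refine ⟨fun a s' h => ?_, hfin⟩
        obtain ⟨t'', t', hA, hB, hC, hD⟩ := hstep a s' h
        exact ⟨t'', t', hA, hB, Or.inr hC, Or.inr hD⟩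
end

section
/- If a state s of an LTS has a τ-transition s →τ t which is its unique outgoing transition (i.e., every transition from s has label τ and target t), and termination is propagated along it (s↓ implies t↓), then s and t are branching bisimilar, i.e., the τ-step is inert. -/
/-- A τ-transition `s →τ t` which is the unique outgoing
transition of `s`, with `s↓ → t↓`, is inert: `s` and `t` are branching
bisimilar. -/
theorem unique_tau_step_is_inert {S A : Type} (L : LTS S A) (s t : S)
    (htr : L.tr s none t)
    (huniq : ∀ a u, L.tr s a u → a = none ∧ u = t)
    (hfin : L.fin s → L.fin t) :
    BBisim L s t := by
  refine ⟨fun x y => x = y ∨ (x = s ∧ y = t) ∨ (x = t ∧ y = s), ⟨?_, ?_⟩, Or.inr (Or.inl ⟨rfl, rfl⟩)⟩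
  · rintro x y (rfl | ⟨rfl, rfl⟩ | ⟨rfl, rfl⟩) <;> tauto
  · rintro x y (rfl | ⟨hx, hy⟩ | ⟨hx, hy⟩)
    · exact ⟨fun a s' h => ⟨x, s', Relation.ReflTransGen.refl, Or.inl h, Or.inl rfl, Or.inl rfl⟩,
        fun h => ⟨x, Relation.ReflTransGen.refl, h⟩⟩
    · subst x; subst y
      refine ⟨fun a u h => ?_, fun h => ⟨t, Relation.ReflTransGen.refl, hfin h⟩⟩
      obtain ⟨rfl, hu⟩ := huniq a u h; subst u
      exact ⟨t, t, Relation.ReflTransGen.refl, Or.inr ⟨rfl, rfl⟩, Or.inr (Or.inl ⟨rfl, rfl⟩), Or.inl rfl⟩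
    · subst x; subst y
      refine ⟨fun a u h => ⟨t, u, Relation.ReflTransGen.single htr, Or.inl h, Or.inl rfl, Or.inl rfl⟩,
        fun h => ⟨t, Relation.ReflTransGen.single htr, h⟩⟩
end

section
/- For every queue automaton there exists a queue automaton without wildcard transitions (no transitions labeled a[*/δ]) whose process graph is branching bisimilar to that of the original automaton. -/
/-- A branching bisimulation between (the states of) two LTSs. -/
def IsBBisimSys {S₁ S₂ A : Type} (L₁ : LTS S₁ A) (L₂ : LTS S₂ A)
    (R : S₁ → S₂ → Prop) : Prop :=
  (∀ s t, R s t →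
    (∀ a s', L₁.tr s a s' →
      ∃ t'' t', L₂.tauStar t t'' ∧ L₂.optStep t'' a t' ∧ R s t'' ∧ R s' t') ∧
    (L₁.fin s → ∃ t', L₂.tauStar t t' ∧ L₂.fin t')) ∧
  (∀ s t, R s t →
    (∀ a t', L₂.tr t a t' →
      ∃ s'' s', L₁.tauStar s s'' ∧ L₁.optStep s'' a s' ∧ R s'' t ∧ R s' t') ∧
    (L₂.fin t → ∃ s', L₁.tauStar s s' ∧ L₁.fin s'))

/-- Two pointed process graphs are branching bisimilar. -/
def BBisimSys {S₁ S₂ A : Type} (L₁ : LTS S₁ A) (s : S₁) (L₂ : LTS S₂ A) (t : S₂) : Prop :=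
  ∃ R, IsBBisimSys L₁ L₂ R ∧ R s t

/-- The head condition of a queue-automaton transition: `ε`, `*`, or a datum. -/
inductive Head (D : Type) where
  | emp : Head D
  | star : Head D
  | data (d : D) : Head D

/-- A queue automaton. -/
structure QA (S A D : Type) where
  tr : S → Option A → Head D → List D → S → Prop
  init : S
  fin : S → Prop

/-- Effect of a transition with head condition `h` enqueueing `δ` on the queue
contents (head of the queue is the rightmost element, enqueueing prepends). -/
inductive QStep {D : Type} : Head D → List D → List D → List D → Prop
  | emp (δ : List D) : QStep Head.emp δ [] δ
  | data (d : D) (δ ζ : List D) : QStep (Head.data d) δ (ζ ++ [d]) (δ ++ ζ)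
  | star (δ ζ : List D) : QStep Head.star δ ζ (δ ++ ζ)

/-- The process graph of a queue automaton. -/
def QA.proc {S A D : Type} (Q : QA S A D) : LTS (S × List D) A where
  tr := fun c a c' => ∃ h δ, Q.tr c.1 a h δ c'.1 ∧ QStep h δ c.2 c'.2
  fin := fun c => Q.fin c.1

/-- The queue automaton has finitely many transitions. -/
def QA.FiniteTrans {S A D : Type} (Q : QA S A D) : Prop :=
  Set.Finite {x : S × Option A × Head D × List D × S |
    Q.tr x.1 x.2.1 x.2.2.1 x.2.2.2.1 x.2.2.2.2}

/-!
A wildcard transition `s →a[*/δ] t` is split according to whether the queue is empty. On the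
empty queue it acts as `s →a[ε/δ] t`. On a nonempty queue `ζ ++ [d]` it dequeues `d` and enqueues
`d` followed by a fresh marker `none`, entering an auxiliary state in which τ-transitions `e/e`
rotate the queue until the marker is at the head; dequeuing the marker and enqueueing `δ` then
reaches `t` with queue `δ ++ ζ ++ [d]`, the effect of the wildcard transition. The auxiliary
configurations are related to the target of the wildcard transition: they have no observable
behaviour of their own and reach the image of that target by τ-steps, which is all a branching
bisimulation needs.
-/

theorem IsBBisimSys.of_catchUp {S₁ S₂ A : Type} {L₁ : LTS S₁ A} {L₂ : LTS S₂ A}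
    {R : S₁ → S₂ → Prop} (emb : S₁ → S₂) (h_emb : ∀ x, R x (emb x))
    (catchUp : ∀ x y, R x y → L₂.tauStar y (emb x))
    (fwd : ∀ x a x', L₁.tr x a x' → ∃ y', L₂.tr (emb x) a y' ∧ R x' y')
    (fwd_fin : ∀ x, L₁.fin x → L₂.fin (emb x))
    (bwd : ∀ x y a y', R x y → L₂.tr y a y' →
      (a = none ∧ R x y') ∨ ∃ x', L₁.tr x a x' ∧ R x' y')
    (bwd_fin : ∀ x y, R x y → L₂.fin y → L₁.fin x) :
    IsBBisimSys L₁ L₂ R := by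
  refine ⟨fun x y hxy => ⟨fun a x' hx => ?_, fun hx => ?_⟩,
    fun x y hxy => ⟨fun a y' hy => ?_, fun hy => ⟨x, .refl, bwd_fin x y hxy hy⟩⟩⟩
  · obtain ⟨y', hy, hxy'⟩ := fwd x a x' hx
    exact ⟨emb x, y', catchUp x y hxy, .inl hy, h_emb x, hxy'⟩
  · exact ⟨emb x, catchUp x y hxy, fwd_fin x hx⟩
  · rcases bwd x y a y' hxy hy with ⟨rfl, hxy'⟩ | ⟨x', hx, hxy'⟩
    · exact ⟨x, x, .refl, .inr ⟨rfl, rfl⟩, hxy, hxy'⟩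
    · exact ⟨x, x', .refl, .inl hx, hxy, hxy'⟩

theorem List.exists_of_map_eq_append_singleton {α β : Type*} {f : α → β}
    (hf : Function.Injective f) {l : List α} {ξ : List β} {a : α} (h : l.map f = ξ ++ [f a]) :
    ∃ l₀, l = l₀ ++ [a] ∧ ξ = l₀.map f := by
  obtain ⟨l₀, e, rfl, rfl, he⟩ := List.map_eq_append_iff.1 h
  obtain ⟨a', rfl, ha⟩ := List.map_eq_singleton_iff.1 he
  exact ⟨l₀, by rw [hf ha], rfl⟩

def Head.starAsEmp {D : Type} : Head D → Head (Option D)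
  | .emp | .star => .emp
  | .data d => .data (some d)

theorem Head.starAsEmp_ne_star {D : Type} (h : Head D) : h.starAsEmp ≠ .star := by
  cases h <;> nofun

namespace QStep

variable {D : Type} {h : Head D} {δ q q' : List D}

theorem emp_iff : QStep .emp δ q q' ↔ q = [] ∧ q' = δ := by
  refine ⟨fun h => ?_, fun ⟨hq, hq'⟩ => hq ▸ hq' ▸ .emp δ⟩
  cases h
  exact ⟨rfl, rfl⟩

theorem data_iff {d : D} : QStep (.data d) δ q q' ↔ ∃ ζ, q = ζ ++ [d] ∧ q' = δ ++ ζ := by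
  refine ⟨fun h => ?_, fun ⟨ζ, hq, hq'⟩ => hq ▸ hq' ▸ .data d δ ζ⟩
  cases h
  exact ⟨_, rfl, rfl⟩

theorem star_iff : QStep .star δ q q' ↔ q' = δ ++ q := by
  refine ⟨fun h => ?_, fun hq' => hq' ▸ .star δ q⟩
  cases h
  rfl

theorem starAsEmp (hq : QStep h δ q q') (h_star : h = .star → q = []) :
    QStep h.starAsEmp (δ.map some) (q.map some) (q'.map some) := by
  cases hq with
  | emp => exact .emp _
  | data d δ ζ => simpa [Head.starAsEmp] using QStep.data (some d) (δ.map some) (ζ.map some)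
  | star δ ζ =>
    obtain rfl := h_star rfl
    simpa [Head.starAsEmp] using QStep.emp (δ.map some)

theorem of_starAsEmp {y : List (Option D)}
    (hq : QStep h.starAsEmp (δ.map some) (q.map some) y) :
    ∃ q', QStep h δ q q' ∧ y = q'.map some := by
  cases h with
  | emp =>
    obtain ⟨hnil, rfl⟩ := emp_iff.1 hq
    obtain rfl := List.map_eq_nil_iff.1 hnil
    exact ⟨δ, .emp δ, rfl⟩
  | star =>
    obtain ⟨hnil, rfl⟩ := emp_iff.1 hq
    obtain rfl := List.map_eq_nil_iff.1 hnil
    exact ⟨δ ++ [], .star δ [], by simp⟩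
  | data d =>
    obtain ⟨ξ, hsnoc, rfl⟩ := data_iff.1 hq
    obtain ⟨ζ, rfl, rfl⟩ := List.exists_of_map_eq_append_singleton (Option.some_injective _) hsnoc
    exact ⟨δ ++ ζ, .data d δ ζ, by simp⟩

end QStep

namespace QA

variable {S A D : Type} (Q : QA S A D)

@[ext]
structure StarTrans where
  src : S
  act : Option A
  out : List D
  tgt : S
  isTr : Q.tr src act .star out tgt

inductive ElimStarTr : S ⊕ Q.StarTrans → Option A → Head (Option D) → List (Option D) →
    S ⊕ Q.StarTrans → Prop
  | lift {s a h δ t} : Q.tr s a h δ t → ElimStarTr (.inl s) a h.starAsEmp (δ.map some) (.inl t)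
  | enter (w : Q.StarTrans) (d : D) :
      ElimStarTr (.inl w.src) w.act (.data (some d)) [some d, none] (.inr w)
  | rotate (w : Q.StarTrans) (e : D) :
      ElimStarTr (.inr w) none (.data (some e)) [some e] (.inr w)
  | exit (w : Q.StarTrans) : ElimStarTr (.inr w) none (.data none) (w.out.map some) (.inl w.tgt)

def elimStar : QA (S ⊕ Q.StarTrans) A (Option D) where
  tr := Q.ElimStarTr
  init := .inl Q.init
  fin := Sum.elim Q.fin fun _ => False

/-- In `rotating`, the part `ζ₁` of the queue has yet to be rotated past the marker `none`. -/
inductive ElimStarRel : S × List D → (S ⊕ Q.StarTrans) × List (Option D) → Prop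
  | base (s : S) (ζ : List D) : ElimStarRel (s, ζ) (.inl s, ζ.map some)
  | rotating (w : Q.StarTrans) (d : D) (ζ₁ ζ₂ : List D) :
      ElimStarRel (w.tgt, w.out ++ ζ₁ ++ ζ₂ ++ [d])
        (.inr w, ζ₂.map some ++ some d :: none :: ζ₁.map some)

variable {Q}

theorem elimStar_tr_ne_star {s : S ⊕ Q.StarTrans} {a : Option A} {δ : List (Option D)}
    {t : S ⊕ Q.StarTrans} : ¬ Q.elimStar.tr s a .star δ t := by
  intro htr
  generalize hstar : (Head.star : Head (Option D)) = h at htr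
  cases htr with
  | lift => exact Head.starAsEmp_ne_star _ hstar.symm
  | _ => nomatch hstar

theorem finite_starTrans (hQ : Q.FiniteTrans) : Finite Q.StarTrans :=
  have := hQ.to_subtype
  Finite.of_injective (fun w => (⟨(w.src, w.act, .star, w.out, w.tgt), w.isTr⟩ :
      ↥{x : S × Option A × Head D × List D × S | Q.tr x.1 x.2.1 x.2.2.1 x.2.2.2.1 x.2.2.2.2}))
    fun w w' h => by
      simp only [Subtype.mk.injEq, Prod.mk.injEq] at h
      ext <;> simp [h]

theorem elimStar_finiteTrans [Finite D] (hQ : Q.FiniteTrans) : Q.elimStar.FiniteTrans := by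
  have := finite_starTrans hQ
  refine ((hQ.image fun x => (.inl x.1, x.2.1, x.2.2.1.starAsEmp, x.2.2.2.1.map some,
      .inl x.2.2.2.2)).union <| (Set.finite_range fun p : Q.StarTrans × D =>
      (.inl p.1.src, p.1.act, .data (some p.2), [some p.2, none], .inr p.1)).union <|
    (Set.finite_range fun p : Q.StarTrans × D =>
      (.inr p.1, none, .data (some p.2), [some p.2], .inr p.1)).union <|
    Set.finite_range fun w : Q.StarTrans =>
      (.inr w, none, .data none, w.out.map some, .inl w.tgt)).subset ?_
  rintro ⟨s, a, h, δ, t⟩ (htr | ⟨w, d⟩ | ⟨w, e⟩ | w)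
  · exact .inl ⟨(_, _, _, _, _), htr, rfl⟩
  · exact .inr <| .inl ⟨(w, d), rfl⟩
  · exact .inr <| .inr <| .inl ⟨(w, e), rfl⟩
  · exact .inr <| .inr <| .inr ⟨w, rfl⟩

theorem elimStar_tauStar_rotating (w : Q.StarTrans) (d : D) (ζ₁ ζ₂ : List D) :
    Q.elimStar.proc.tauStar (.inr w, ζ₂.map some ++ some d :: none :: ζ₁.map some)
      (.inl w.tgt, (w.out ++ ζ₁ ++ ζ₂ ++ [d]).map some) := by
  induction ζ₁ using List.reverseRecOn generalizing ζ₂ with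
  | nil =>
    exact .single ⟨_, _, .exit w, QStep.data_iff.2 ⟨ζ₂.map some ++ [some d], by simp, by simp⟩⟩
  | append_singleton ζ₁ e ih =>
    refine .head (b := (Sum.inr w, (e :: ζ₂).map some ++ some d :: none :: ζ₁.map some))
      ⟨_, _, .rotate w e,
      QStep.data_iff.2 ⟨ζ₂.map some ++ some d :: none :: ζ₁.map some, by simp, rfl⟩⟩ ?_
    simpa [LTS.tauStar] using ih (e :: ζ₂)

theorem exists_elimStar_proc_tr {x x' : S × List D} {a : Option A} (hx : Q.proc.tr x a x') :
    ∃ y', Q.elimStar.proc.tr (.inl x.1, x.2.map some) a y' ∧ Q.ElimStarRel x' y' := by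
  obtain ⟨s, q⟩ := x
  obtain ⟨t, q'⟩ := x'
  obtain ⟨h, δ, htr, hq⟩ := hx
  by_cases hwild : h = .star ∧ q ≠ []
  · obtain ⟨rfl, hne⟩ := hwild
    obtain ⟨ζ, d, rfl⟩ := (List.eq_nil_or_concat q).resolve_left hne
    obtain rfl := QStep.star_iff.1 hq
    let w : Q.StarTrans := ⟨s, a, δ, t, htr⟩
    refine ⟨(.inr w, [some d, none] ++ ζ.map some),
      ⟨_, _, .enter w d, QStep.data_iff.2 ⟨ζ.map some, by simp, rfl⟩⟩, ?_⟩
    simpa using ElimStarRel.rotating w d ζ []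
  · exact ⟨(.inl t, q'.map some), ⟨_, _, .lift htr, hq.starAsEmp (by tauto)⟩, .base t q'⟩

theorem exists_proc_tr_of_elimStar_inl {s : S} {ζ : List D} {a : Option A}
    {y' : (S ⊕ Q.StarTrans) × List (Option D)}
    (hy : Q.elimStar.proc.tr (.inl s, ζ.map some) a y') :
    ∃ x', Q.proc.tr (s, ζ) a x' ∧ Q.ElimStarRel x' y' := by
  obtain ⟨t, ξ⟩ := y'
  obtain ⟨h, δ, htr, hq⟩ := hy
  cases htr with
  | lift htr =>
    obtain ⟨q', hq', rfl⟩ := hq.of_starAsEmp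
    exact ⟨(_, q'), ⟨_, _, htr, hq'⟩, .base _ _⟩
  | enter w d =>
    obtain ⟨ξ, hsnoc, rfl⟩ := QStep.data_iff.1 hq
    obtain ⟨ζ, rfl, rfl⟩ := List.exists_of_map_eq_append_singleton (Option.some_injective _) hsnoc
    refine ⟨(w.tgt, w.out ++ ζ ++ [d]), ⟨_, _, w.isTr, QStep.star_iff.2 (by simp)⟩, ?_⟩
    simpa using ElimStarRel.rotating w d ζ []

theorem elimStar_proc_tr_rotating {w : Q.StarTrans} {d : D} {ζ₁ ζ₂ : List D} {a : Option A}
    {y' : (S ⊕ Q.StarTrans) × List (Option D)}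
    (hy : Q.elimStar.proc.tr (.inr w, ζ₂.map some ++ some d :: none :: ζ₁.map some) a y') :
    a = none ∧ Q.ElimStarRel (w.tgt, w.out ++ ζ₁ ++ ζ₂ ++ [d]) y' := by
  obtain ⟨t, ξ⟩ := y'
  obtain ⟨h, δ, htr, hq⟩ := hy
  cases htr with
  | rotate _ e =>
    obtain ⟨ξ, hsnoc, rfl⟩ := QStep.data_iff.1 hq
    rcases List.eq_nil_or_concat ζ₁ with rfl | ⟨ζ₁, e', rfl⟩
    · have : ξ ++ [some e] = (ζ₂.map some ++ [some d]) ++ [none] := by simpa using hsnoc.symm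
      nomatch (List.append_singleton_inj.1 this).2
    · have : ξ ++ [some e] = (ζ₂.map some ++ some d :: none :: ζ₁.map some) ++ [some e'] := by
        simpa using hsnoc.symm
      obtain ⟨rfl, ⟨⟩⟩ := List.append_singleton_inj.1 this
      simpa using ElimStarRel.rotating w d ζ₁ (e :: ζ₂)
  | exit =>
    obtain ⟨ξ, hsnoc, rfl⟩ := QStep.data_iff.1 hq
    rcases List.eq_nil_or_concat ζ₁ with rfl | ⟨ζ₁, e', rfl⟩
    · have : ξ ++ [none] = (ζ₂.map some ++ [some d]) ++ [none] := by simpa using hsnoc.symm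
      obtain ⟨rfl, -⟩ := List.append_singleton_inj.1 this
      simpa using ElimStarRel.base (Q := Q) w.tgt (w.out ++ ζ₂ ++ [d])
    · have : ξ ++ [none] = (ζ₂.map some ++ some d :: none :: ζ₁.map some) ++ [some e'] := by
        simpa using hsnoc.symm
      nomatch (List.append_singleton_inj.1 this).2

theorem isBBisimSys_elimStarRel : IsBBisimSys Q.proc Q.elimStar.proc Q.ElimStarRel := by
  refine .of_catchUp (fun x => (.inl x.1, x.2.map some)) (fun x => .base x.1 x.2) ?_
    (fun _ _ _ => exists_elimStar_proc_tr) (fun _ hx => hx) ?_ ?_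
  · rintro _ _ (_ | ⟨w, d, ζ₁, ζ₂⟩)
    exacts [.refl, elimStar_tauStar_rotating w d ζ₁ ζ₂]
  · rintro _ _ _ _ (_ | _) hy
    exacts [.inr (exists_proc_tr_of_elimStar_inl hy), .inl (elimStar_proc_tr_rotating hy)]
  · rintro _ _ (_ | _) hy
    exacts [hy, hy.elim]

end QA

theorem eliminate_wildcard_transitions_general {S A D : Type} [Finite S] [Finite D]
    (Q : QA S A D) (hQ : Q.FiniteTrans) :
    ∃ (S' D' : Type) (_ : Finite S') (_ : Finite D') (Q' : QA S' A D'),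
      Q'.FiniteTrans ∧
      (∀ s a δ t, ¬ Q'.tr s a Head.star δ t) ∧
      BBisimSys Q.proc (Q.init, []) Q'.proc (Q'.init, []) := by
  have := QA.finite_starTrans hQ
  exact ⟨_, _, inferInstance, inferInstance, Q.elimStar, QA.elimStar_finiteTrans hQ,
    fun _ _ _ _ => QA.elimStar_tr_ne_star, _, QA.isBBisimSys_elimStarRel, .base Q.init []⟩

/-- For every queue automaton there exists a queue automaton
without wildcard (`a[*/δ]`) transitions whose process graph is branching
bisimilar to that of the original automaton. -/
theorem eliminate_wildcard_transitions {S A D : Type} [Finite S] [Finite A] [Finite D]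
    (Q : QA S A D) (hQ : Q.FiniteTrans) :
    ∃ (S' D' : Type) (_ : Finite S') (_ : Finite D') (Q' : QA S' A D'),
      Q'.FiniteTrans ∧
      (∀ s a δ t, ¬ Q'.tr s a Head.star δ t) ∧
      BBisimSys Q.proc (Q.init, []) Q'.proc (Q'.init, []) :=
  eliminate_wildcard_transitions_general Q hQ
end

section
/- For every queue automaton there exists a queue automaton with only singleton enqueues and separate dequeues whose process graph is branching bisimilar (and hence whose language is equal) to that of the original automaton. -/
/-- Weak word transitions: τ-steps do not contribute to the word. -/
inductive WStep {S A : Type} (L : LTS S A) : S → List A → S → Prop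
  | refl (s : S) : WStep L s [] s
  | act {s t u : S} {a : A} {w : List A} :
      L.tr s (some a) t → WStep L t w u → WStep L s (a :: w) u
  | tau {s t u : S} {w : List A} :
      L.tr s none t → WStep L t w u → WStep L s w u

/-- The language of a state: words leading to a terminating state. -/
def LTS.lang {S A : Type} (L : LTS S A) (s : S) : Set (List A) :=
  { w | ∃ t, WStep L s w t ∧ L.fin t }

/-- All transitions are singleton enqueues (`a[*/d]`) or separate dequeues
(`a[ε/ε]` or `a[d/ε]`). -/
def QA.SingSep {S A D : Type} (Q : QA S A D) : Prop :=
  ∀ s a h δ t, Q.tr s a h δ t →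
    (h = Head.star ∧ ∃ d, δ = [d]) ∨
    (h = Head.emp ∧ δ = []) ∨
    ((∃ d, h = Head.data d) ∧ δ = [])


/-!
Each transition `a[c/δ]` is split into a first step that performs the test `c` and the action
`a` but enqueues nothing (a single blank if `c = *`, since `a[*/ε]` is not a singleton enqueue),
followed by silent singleton enqueues of the letters of `δ`, which the new automaton remembers as
a pending list in its control state; finitely many transitions bound the length of that list.
Blanks are dequeued silently whenever they reach the head of the queue. Forgetting the blanks and
putting the pending list in front of the queue maps each configuration of the new automaton to
one of the original, and the graph of this map is a branching bisimulation: silent steps do not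
change the image, and every step of the original is matched after flushing the pending list and
discarding the blanks at the head.
-/

section BranchingSim

variable {S₁ S₂ A : Type}

def IsBranchingSim (L₁ : LTS S₁ A) (L₂ : LTS S₂ A) (R : S₁ → S₂ → Prop) : Prop :=
  ∀ s t, R s t →
    (∀ a s', L₁.tr s a s' →
      ∃ t'' t', L₂.tauStar t t'' ∧ L₂.optStep t'' a t' ∧ R s t'' ∧ R s' t') ∧
    (L₁.fin s → ∃ t', L₂.tauStar t t' ∧ L₂.fin t')

variable {L : LTS S₁ A} {s s' u : S₁} {w : List A}

theorem WStep.tauStar_trans (h : L.tauStar s s') (hw : WStep L s' w u) : WStep L s w u := by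
  induction h using Relation.ReflTransGen.head_induction_on with
  | refl => exact hw
  | head hstep _ ih => exact .tau hstep ih

theorem WStep.optStep_trans {a : Option A} (h : L.optStep s a s') (hw : WStep L s' w u) :
    WStep L s (a.toList ++ w) u := by
  rcases h with h | ⟨rfl, rfl⟩
  · cases a
    · exact .tau h hw
    · exact .act h hw
  · exact hw

variable {L₁ : LTS S₁ A} {L₂ : LTS S₂ A}

theorem IsBranchingSim.wStep {R : S₁ → S₂ → Prop} (hR : IsBranchingSim L₁ L₂ R)
    (hw : WStep L₁ s w u) (hu : L₁.fin u) {t : S₂} (hst : R s t) :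
    ∃ v, WStep L₂ t w v ∧ L₂.fin v := by
  induction hw generalizing t with
  | refl s =>
    obtain ⟨t', htt', ht'⟩ := (hR s t hst).2 hu
    exact ⟨t', .tauStar_trans htt' (.refl t'), ht'⟩
  | act hstep _ ih | tau hstep _ ih =>
    obtain ⟨t'', t', htt'', ht''t', -, hst'⟩ := (hR _ t hst).1 _ _ hstep
    obtain ⟨v, htv, hv⟩ := ih hu hst'
    exact ⟨v, .tauStar_trans htt'' (.optStep_trans ht''t' htv), hv⟩

theorem IsBranchingSim.lang_subset {R : S₁ → S₂ → Prop} (hR : IsBranchingSim L₁ L₂ R) {t : S₂}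
    (hst : R s t) : L₁.lang s ⊆ L₂.lang t :=
  fun _ ⟨_, hw, hu⟩ => hR.wStep hw hu hst

theorem BBisimSys.lang_eq {t : S₂} (h : BBisimSys L₁ s L₂ t) : L₁.lang s = L₂.lang t := by
  obtain ⟨R, ⟨hR, hR'⟩, hst⟩ := h
  exact (IsBranchingSim.lang_subset hR hst).antisymm
    (IsBranchingSim.lang_subset (R := flip R) (fun t s => hR' s t) hst)

theorem isBBisimSys_of_abstraction (f : S₂ → S₁)
    (hfwd : ∀ t a s', L₁.tr (f t) a s' →
      ∃ t'' t', L₂.tauStar t t'' ∧ L₂.optStep t'' a t' ∧ f t'' = f t ∧ f t' = s')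
    (hback : ∀ t a t', L₂.tr t a t' → L₁.optStep (f t) a (f t'))
    (hfin : ∀ t, L₂.fin t ↔ L₁.fin (f t)) :
    IsBBisimSys L₁ L₂ (fun s t => f t = s) := by
  constructor
  · rintro _ t rfl
    exact ⟨hfwd t, fun ht => ⟨t, .refl, (hfin t).2 ht⟩⟩
  · rintro _ t rfl
    exact ⟨fun a t' ht' => ⟨f t, f t', .refl, hback t a t' ht', rfl, rfl⟩,
      fun ht => ⟨f t, .refl, (hfin t).1 ht⟩⟩

end BranchingSim

instance {D : Type} [Finite D] : Finite (Head D) :=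
  Finite.of_surjective
    (fun o : Option (Option D) => match o with
      | none => .emp
      | some none => .star
      | some (some d) => .data d)
    (by
      rintro (_ | _ | d)
      exacts [⟨none, rfl⟩, ⟨some none, rfl⟩, ⟨some (some d), rfl⟩])

namespace QA

variable {S A D : Type}

def EnqueuesAtMost (Q : QA S A D) (N : ℕ) : Prop :=
  ∀ s a h δ t, Q.tr s a h δ t → δ.length ≤ N

theorem FiniteTrans.exists_enqueuesAtMost {Q : QA S A D} (hQ : Q.FiniteTrans) :
    ∃ N, Q.EnqueuesAtMost N := by
  obtain ⟨N, hN⟩ := (hQ.image fun x => x.2.2.2.1.length).bddAbove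
  exact ⟨N, fun s a h δ t ht => hN ⟨(s, a, h, δ, t), ht, rfl⟩⟩

abbrev Pending (D : Type) (N : ℕ) := {ρ : List D // ρ.length ≤ N}

instance {N : ℕ} [Finite D] : Finite (Pending D N) := (List.finite_length_le D N).to_subtype

variable (Q : QA S A D) (N : ℕ)

attribute [local simp] List.reduceOption_append

/-- The datum `none` is a blank; in a state `(s, ρ)` the letters of `ρ` remain to be enqueued. -/
inductive ToSingSepTr :
    S × Pending D N → Option A → Head (Option D) → List (Option D) → S × Pending D N → Prop
  | emp {s a δ t} (h : Q.tr s a .emp δ t) (hδ : δ.length ≤ N) :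
      ToSingSepTr (s, ⟨[], Nat.zero_le N⟩) a .emp [] (t, ⟨δ, hδ⟩)
  | data {s a d δ t} (h : Q.tr s a (.data d) δ t) (hδ : δ.length ≤ N) :
      ToSingSepTr (s, ⟨[], Nat.zero_le N⟩) a (.data (some d)) [] (t, ⟨δ, hδ⟩)
  | star {s a δ t} (h : Q.tr s a .star δ t) (hδ : δ.length ≤ N) :
      ToSingSepTr (s, ⟨[], Nat.zero_le N⟩) a .star [none] (t, ⟨δ, hδ⟩)
  | enqueue {s ρ d} (hρ : (ρ ++ [d]).length ≤ N) :
      ToSingSepTr (s, ⟨ρ ++ [d], hρ⟩) none .star [some d]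
        (s, ⟨ρ, (List.prefix_append ρ [d]).length_le.trans hρ⟩)
  | dropBlank {c} : ToSingSepTr c none (.data none) [] c

def toSingSep : QA (S × Pending D N) A (Option D) where
  tr := ToSingSepTr Q N
  init := (Q.init, ⟨[], Nat.zero_le N⟩)
  fin := fun c => Q.fin c.1

variable {N} in
def origConfig (c : (S × Pending D N) × List (Option D)) : S × List D :=
  (c.1.1, c.1.2.1 ++ c.2.reduceOption)

theorem toSingSep_singSep : (Q.toSingSep N).SingSep := by
  rintro _ _ _ _ _ (_ | _ | _ | _ | _)
  exacts [.inr (.inl ⟨rfl, rfl⟩), .inr (.inr ⟨⟨_, rfl⟩, rfl⟩), .inl ⟨rfl, _, rfl⟩,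
    .inl ⟨rfl, _, rfl⟩, .inr (.inr ⟨⟨_, rfl⟩, rfl⟩)]

theorem toSingSep_finiteTrans [Finite S] [Finite A] [Finite D] :
    (Q.toSingSep N).FiniteTrans := by
  refine (Set.finite_univ.prod <| Set.finite_univ.prod <| Set.finite_univ.prod <|
    (List.finite_length_le _ 1).prod Set.finite_univ).subset ?_
  rintro ⟨c, a, h, δ, c'⟩ ht
  cases ht <;> simp

theorem toSingSep_tauStar_enqueue (s : S) (ρ : Pending D N) (ζ : List (Option D)) :
    (Q.toSingSep N).proc.tauStar ((s, ρ), ζ) ((s, ⟨[], Nat.zero_le N⟩), ρ.1.map some ++ ζ) := by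
  obtain ⟨ρ, hρ⟩ := ρ
  induction ρ using List.reverseRecOn generalizing ζ with
  | nil => exact .refl
  | append_singleton ρ d ih =>
    have hρ' := (List.prefix_append ρ [d]).length_le.trans hρ
    have hstep : (Q.toSingSep N).proc.tr ((s, ⟨ρ ++ [d], hρ⟩), ζ) none
        ((s, ⟨ρ, hρ'⟩), some d :: ζ) :=
      ⟨.star, [some d], .enqueue hρ, .star [some d] ζ⟩
    simpa using .head hstep (ih (some d :: ζ) hρ')

theorem toSingSep_tauStar_dropBlanks (c : S × Pending D N) (η : List (Option D)) (n : ℕ) :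
    (Q.toSingSep N).proc.tauStar (c, η ++ List.replicate n none) (c, η) := by
  induction n with
  | zero => simpa using .refl
  | succ n ih =>
    refine .head (b := (c, η ++ List.replicate n none)) ⟨.data none, [], .dropBlank, ?_⟩ ih
    rw [List.replicate_succ', ← List.append_assoc]
    exact QStep.data none [] _

theorem toSingSep_optStep_origConfig {c c' : (S × Pending D N) × List (Option D)}
    {a : Option A} (h : (Q.toSingSep N).proc.tr c a c') :
    Q.proc.optStep (origConfig c) a (origConfig c') := by
  obtain ⟨⟨s, ρ⟩, ξ⟩ := c
  obtain ⟨⟨t, ρ'⟩, ξ'⟩ := c'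
  obtain ⟨_, _, htr, hq⟩ := h
  cases htr with
  | emp htr =>
    cases hq
    exact .inl ⟨.emp, _, htr, by simpa [origConfig] using QStep.emp _⟩
  | data htr =>
    cases hq
    exact .inl ⟨.data _, _, htr, by simpa [origConfig] using QStep.data _ _ _⟩
  | star htr =>
    cases hq
    exact .inl ⟨.star, _, htr, by simpa [origConfig] using QStep.star _ _⟩
  | enqueue =>
    cases hq
    exact .inr ⟨rfl, by simp [origConfig]⟩
  | dropBlank =>
    cases hq
    exact .inr ⟨rfl, by simp [origConfig]⟩

variable {Q N}

theorem exists_toSingSep_step_of_flushed (hN : Q.EnqueuesAtMost N) {s : S} {ξ : List (Option D)}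
    {ζ : List D} (hξ : ξ.reduceOption = ζ) {a : Option A} {p' : S × List D}
    (hp : Q.proc.tr (s, ζ) a p') :
    ∃ c'' c', (Q.toSingSep N).proc.tauStar ((s, ⟨[], Nat.zero_le N⟩), ξ) c'' ∧
      (Q.toSingSep N).proc.tr c'' a c' ∧ origConfig c'' = (s, ζ) ∧ origConfig c' = p' := by
  obtain ⟨t, ζ'⟩ := p'
  obtain ⟨h, δ, htr, hq⟩ := hp
  have hδ := hN _ _ _ _ _ htr
  cases hq with
  | emp =>
    obtain ⟨n, rfl⟩ := (List.reduceOption_eq_nil_iff ξ).1 hξ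
    refine ⟨((s, ⟨[], Nat.zero_le N⟩), []), ((t, ⟨_, hδ⟩), []),
      toSingSep_tauStar_dropBlanks Q N _ [] n, ⟨.emp, [], .emp htr hδ, .emp []⟩, ?_, ?_⟩ <;>
    simp [origConfig]
  | data d _ ζ =>
    obtain ⟨η, μ, rfl, hη, hμ⟩ := (List.reduceOption_eq_concat_iff ξ ζ d).1 (by simpa using hξ)
    obtain ⟨n, rfl⟩ := (List.reduceOption_eq_nil_iff μ).1 hμ
    refine ⟨((s, ⟨[], Nat.zero_le N⟩), η ++ [some d]), ((t, ⟨δ, hδ⟩), η), ?_,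
      ⟨.data (some d), [], .data htr hδ, .data (some d) [] η⟩, ?_, ?_⟩
    · simpa using toSingSep_tauStar_dropBlanks Q N _ (η ++ [some d]) n
    all_goals simp [origConfig, hη]
  | star =>
    refine ⟨((s, ⟨[], Nat.zero_le N⟩), ξ), ((t, ⟨δ, hδ⟩), none :: ξ), .refl,
      ⟨.star, [none], .star htr hδ, .star [none] ξ⟩, ?_, ?_⟩ <;>
    simp [origConfig, hξ]

theorem exists_toSingSep_step (hN : Q.EnqueuesAtMost N) {c : (S × Pending D N) × List (Option D)}
    {a : Option A} {p' : S × List D} (hp : Q.proc.tr (origConfig c) a p') :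
    ∃ c'' c', (Q.toSingSep N).proc.tauStar c c'' ∧ (Q.toSingSep N).proc.optStep c'' a c' ∧
      origConfig c'' = origConfig c ∧ origConfig c' = p' := by
  obtain ⟨⟨s, ρ⟩, ξ⟩ := c
  obtain ⟨c'', c', hflush, hstep, hc'', hc'⟩ :=
    exists_toSingSep_step_of_flushed hN (ξ := ρ.1.map some ++ ξ)
      (by simp [List.reduceOption, List.filterMap_map]) hp
  exact ⟨c'', c', (toSingSep_tauStar_enqueue Q N s ρ ξ).trans hflush, .inl hstep, hc'', hc'⟩

theorem isBBisimSys_toSingSep (hN : Q.EnqueuesAtMost N) :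
    IsBBisimSys Q.proc (Q.toSingSep N).proc (fun p c => origConfig c = p) :=
  isBBisimSys_of_abstraction origConfig (fun _ _ _ => exists_toSingSep_step hN)
    (fun _ _ _ => Q.toSingSep_optStep_origConfig N) (fun _ => Iff.rfl)

end QA

/-- For every queue automaton there is one with only singleton
enqueues and separate dequeues whose process graph is branching bisimilar
(hence with the same language). -/
theorem singleton_enqueue_separate_dequeue {S A D : Type} [Finite S] [Finite A] [Finite D]
    (Q : QA S A D) (hQ : Q.FiniteTrans) :
    ∃ (S' D' : Type) (_ : Finite S') (_ : Finite D') (Q' : QA S' A D'),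
      Q'.FiniteTrans ∧ Q'.SingSep ∧
      BBisimSys Q.proc (Q.init, []) Q'.proc (Q'.init, []) ∧
      Q.proc.lang (Q.init, []) = Q'.proc.lang (Q'.init, []) := by
  obtain ⟨N, hN⟩ := hQ.exists_enqueuesAtMost
  have hbisim : BBisimSys Q.proc (Q.init, []) (Q.toSingSep N).proc ((Q.toSingSep N).init, []) :=
    ⟨_, QA.isBBisimSys_toSingSep hN, rfl⟩
  exact ⟨_, _, inferInstance, inferInstance, Q.toSingSep N, Q.toSingSep_finiteTrans N,
    Q.toSingSep_singSep N, hbisim, hbisim.lang_eq⟩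
end

section
/- For every queue automaton with two queues there exists a queue automaton with a single queue whose process graph is branching bisimilar to that of the two-queue automaton. -/
/-- A queue automaton with two queues. -/
structure QA2 (S A D : Type) where
  tr : S → Option A → Head D × Head D → List D × List D → S → Prop
  init : S
  fin : S → Prop

/-- The process graph of a two-queue automaton: the one-queue rules are
applied to both queues simultaneously. -/
def QA2.proc {S A D : Type} (Q : QA2 S A D) : LTS (S × List D × List D) A where
  tr := fun c a c' => ∃ h δ, Q.tr c.1 a h δ c'.1 ∧
    QStep h.1 δ.1 c.2.1 c'.2.1 ∧ QStep h.2 δ.2 c.2.2 c'.2.2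
  fin := fun c => Q.fin c.1

/-- The two-queue automaton has finitely many transitions. -/
def QA2.FiniteTrans {S A D : Type} (Q : QA2 S A D) : Prop :=
  Set.Finite {x : S × Option A × (Head D × Head D) × (List D × List D) × S |
    Q.tr x.1 x.2.1 x.2.2.1 x.2.2.2.1 x.2.2.2.2}

theorem IsBBisimSys.of_forward_backward {S₁ S₂ A : Type} {L₁ : LTS S₁ A} {L₂ : LTS S₂ A}
    {R : S₁ → S₂ → Prop}
    (forward : ∀ s t, R s t → ∀ a s', L₁.tr s a s' →
      ∃ t'' t', L₂.tauStar t t'' ∧ L₂.tr t'' a t' ∧ R s t'' ∧ R s' t')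
    (backward : ∀ s t, R s t → ∀ a t', L₂.tr t a t' →
      (a = none ∧ R s t') ∨ ∃ s', L₁.tr s a s' ∧ R s' t')
    (fin_iff : ∀ s t, R s t → (L₁.fin s ↔ L₂.fin t)) :
    IsBBisimSys L₁ L₂ R := by
  refine ⟨fun s t hR => ⟨fun a s' h => ?_, fun hs => ⟨t, .refl, (fin_iff s t hR).1 hs⟩⟩,
    fun s t hR => ⟨fun a t' h => ?_, fun ht => ⟨s, .refl, (fin_iff s t hR).2 ht⟩⟩⟩
  · obtain ⟨t'', t', hτ, ht, hR'', hR'⟩ := forward s t hR a s' h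
    exact ⟨t'', t', hτ, .inl ht, hR'', hR'⟩
  · rcases backward s t hR a t' h with ⟨rfl, hR'⟩ | ⟨s', hs, hR'⟩
    · exact ⟨s, s, .refl, .inr ⟨rfl, rfl⟩, hR, hR'⟩
    · exact ⟨s, s', .refl, .inl hs, hR, hR'⟩

instance Head.finite {D : Type} [Finite D] : Finite (Head D) :=
  Finite.of_injective
    (fun | .emp => (none : Option (Option D)) | .star => some none | .data d => some (some d))
    (by rintro (_ | _ | _) (_ | _ | _) h <;> simp_all)

namespace QStep

variable {D : Type} {δ ζ w w' : List D} {v : D}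

lemma of_eq_data (hw : w = ζ ++ [v]) (hw' : w' = δ ++ ζ) : QStep (.data v) δ w w' :=
  hw ▸ hw' ▸ .data v δ ζ

lemma of_eq_star (hw' : w' = δ ++ w) : QStep .star δ w w' :=
  hw' ▸ .star δ w

lemma data_inv (hq : QStep (.data v) δ w w') : ∃ ζ, w = ζ ++ [v] ∧ w' = δ ++ ζ := by
  cases hq
  exact ⟨_, rfl, rfl⟩

lemma star_inv (hq : QStep .star δ w w') : w' = δ ++ w := by
  cases hq
  rfl

lemma emp_inv (hq : QStep .emp δ w w') : w = [] ∧ w' = δ := by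
  cases hq
  exact ⟨rfl, rfl⟩

end QStep

namespace QA2

variable {S A D : Type}

inductive Letter (D : Type)
  | val (d : D)
  | hash
  | dollar

instance Letter.finite [Finite D] : Finite (Letter D) :=
  Finite.of_injective
    (fun | .val d => some (some d) | .hash => some none | .dollar => (none : Option (Option D)))
    (by rintro (_ | _ | _) (_ | _ | _) h <;> simp_all)

def enc (δ : List D) : List (Letter D) :=
  δ.map .val

@[simp] lemma enc_nil : enc ([] : List D) = [] := rfl

@[simp] lemma enc_cons (d : D) (δ : List D) : enc (d :: δ) = .val d :: enc δ := rfl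

@[simp] lemma length_enc (δ : List D) : (enc δ).length = δ.length :=
  List.length_map _

@[simp] lemma enc_append (δ δ' : List D) : enc (δ ++ δ') = enc δ ++ enc δ' :=
  List.map_append

lemma _root_.QStep.dequeue_val {x : Letter D} {d : D} {δ W w' : List (Letter D)} {γ : List D}
    (hq : QStep (.data (.val d)) δ (W ++ [x] ++ enc γ) w') (hx : ∀ e, x ≠ .val e) :
    ∃ γ', γ = γ' ++ [d] ∧ w' = δ ++ (W ++ [x] ++ enc γ') := by
  obtain ⟨ζ, hw, rfl⟩ := hq.data_inv
  rcases List.eq_nil_or_concat' γ with rfl | ⟨γ', e, rfl⟩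
  · rw [enc_nil, List.append_nil] at hw
    exact absurd (List.append_singleton_inj.1 hw).2 (hx d)
  · rw [enc_append, ← List.append_assoc] at hw
    obtain ⟨rfl, he⟩ := List.append_singleton_inj.1 hw
    exact ⟨γ', by simpa using he, rfl⟩

lemma _root_.QStep.dequeue_sep {x y : Letter D} {δ W w' : List (Letter D)} {γ : List D}
    (hq : QStep (.data y) δ (W ++ [x] ++ enc γ) w') (hy : ∀ e, y ≠ .val e) :
    γ = [] ∧ y = x ∧ w' = δ ++ W := by
  obtain ⟨ζ, hw, rfl⟩ := hq.data_inv
  rcases List.eq_nil_or_concat' γ with rfl | ⟨γ', e, rfl⟩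
  · rw [enc_nil, List.append_nil] at hw
    obtain ⟨rfl, rfl⟩ := List.append_singleton_inj.1 hw
    exact ⟨rfl, rfl, rfl⟩
  · rw [enc_append, ← List.append_assoc] at hw
    exact absurd (List.append_singleton_inj.1 hw).2.symm (by simpa using hy e)

structure Transition (Q : QA2 S A D) where
  src : S
  act : Option A
  head : Head D × Head D
  push : List D × List D
  tgt : S
  mem : Q.tr src act head push tgt

lemma finite_transition {Q : QA2 S A D} (hQ : Q.FiniteTrans) : Finite (Transition Q) := by
  refine @Finite.of_injective _ _ hQ.to_subtype
    (fun t => ⟨(t.src, t.act, t.head, t.push, t.tgt), t.mem⟩) ?_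
  rintro ⟨⟩ ⟨⟩ h
  simp_all

/-- In `idle s i`, `i` records what is known about the head of the second queue: nothing
(`none`), or that it is `o : Option D` (`none` for the empty queue). The `scan` states find that
head; the `run t` states update the queue after the action of `t` has been performed. -/
inductive Ctrl (Q : QA2 S A D)
  | start
  | idle (s : S) (i : Option (Option D))
  | scan₁ (s : S)
  | scanHead (s : S)
  | scan₂ (s : S) (d : D)
  | run₁ (t : Transition Q)
  | runHead (t : Transition Q)
  | run₂ (t : Transition Q)

instance Ctrl.finite {Q : QA2 S A D} [Finite S] [Finite D] [Finite (Transition Q)] :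
    Finite (Ctrl Q) :=
  Finite.of_injective (β := Unit ⊕ (S × Option (Option D)) ⊕ S ⊕ S ⊕ (S × D) ⊕
      Transition Q ⊕ Transition Q ⊕ Transition Q)
    (fun
      | .start => .inl ()
      | .idle s i => .inr (.inl (s, i))
      | .scan₁ s => .inr (.inr (.inl s))
      | .scanHead s => .inr (.inr (.inr (.inl s)))
      | .scan₂ s d => .inr (.inr (.inr (.inr (.inl (s, d)))))
      | .run₁ t => .inr (.inr (.inr (.inr (.inr (.inl t)))))
      | .runHead t => .inr (.inr (.inr (.inr (.inr (.inr (.inl t))))))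
      | .run₂ t => .inr (.inr (.inr (.inr (.inr (.inr (.inr t)))))))
    (by intro x y h; cases x <;> cases y <;> simp_all)

def Ctrl.state {Q : QA2 S A D} : Ctrl Q → S
  | .start => Q.init
  | .idle s _ | .scan₁ s | .scanHead s | .scan₂ s _ => s
  | .run₁ t | .runHead t | .run₂ t => t.tgt

def Enabled : Head D → Option (Option D) → Prop
  | .star, _ => True
  | .emp, i => i = some none
  | .data d, i => i = some (some d)

lemma _root_.QStep.enabled_getLast? {h : Head D} {δn δ δ' : List D} (hq : QStep h δn δ δ') :
    Enabled h (some δ.getLast?) := by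
  cases hq <;> simp [Enabled]

lemma exists_qStep_of_enabled {h : Head D} {i : Option (Option D)} {δ : List D}
    (hh : Enabled h i) (hi : i = none ∨ i = some δ.getLast?) (δn : List D) :
    ∃ δ', QStep h δn δ δ' := by
  cases h with
  | star => exact ⟨_, .star δn δ⟩
  | emp =>
    subst hh
    obtain rfl : δ = [] := by simpa [eq_comm] using hi
    exact ⟨_, .emp δn⟩
  | data d =>
    subst hh
    obtain ⟨ζ, rfl⟩ := List.getLast?_eq_some_iff.1 (by simpa [eq_comm] using hi)
    exact ⟨_, .data d δn ζ⟩

inductive Step (Q : QA2 S A D) : Ctrl Q → Option A → Head (Letter D) → List (Letter D) →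
    Ctrl Q → Prop
  | start : Step Q .start none .emp [.hash] (.idle Q.init none)
  | scan (s) : Step Q (.idle s none) none .star [.dollar] (.scan₁ s)
  | scan₁_rot (s d) : Step Q (.scan₁ s) none (.data (.val d)) [.val d] (.scan₁ s)
  | scan₁_hash (s) : Step Q (.scan₁ s) none (.data .hash) [.hash] (.scanHead s)
  | scanHead_dollar (s) : Step Q (.scanHead s) none (.data .dollar) [] (.idle s (some none))
  | scanHead_val (s d) : Step Q (.scanHead s) none (.data (.val d)) [.val d] (.scan₂ s d)
  | scan₂_rot (s d e) : Step Q (.scan₂ s d) none (.data (.val e)) [.val e] (.scan₂ s d)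
  | scan₂_dollar (s d) : Step Q (.scan₂ s d) none (.data .dollar) [] (.idle s (some (some d)))
  | fire_val (t : Transition Q) (i) {d} (h₁ : t.head.1 = .data d) (h₂ : Enabled t.head.2 i) :
      Step Q (.idle t.src i) t.act (.data (.val d)) [.dollar] (.run₁ t)
  | fire_star (t : Transition Q) (i) (h₁ : t.head.1 = .star) (h₂ : Enabled t.head.2 i) :
      Step Q (.idle t.src i) t.act .star [.dollar] (.run₁ t)
  | fire_emp (t : Transition Q) (i) (h₁ : t.head.1 = .emp) (h₂ : Enabled t.head.2 i) :
      Step Q (.idle t.src i) t.act (.data .hash) ([.hash] ++ enc t.push.1 ++ [.dollar])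
        (.runHead t)
  | run₁_rot (t : Transition Q) (d) : Step Q (.run₁ t) none (.data (.val d)) [.val d] (.run₁ t)
  | run₁_hash (t : Transition Q) :
      Step Q (.run₁ t) none (.data .hash) ([.hash] ++ enc t.push.1) (.runHead t)
  | runHead_val (t : Transition Q) {d} (h₂ : t.head.2 = .data d) :
      Step Q (.runHead t) none (.data (.val d)) [] (.run₂ t)
  | runHead_star (t : Transition Q) (h₂ : t.head.2 = .star) :
      Step Q (.runHead t) none .star [] (.run₂ t)
  | runHead_emp (t : Transition Q) (h₂ : t.head.2 = .emp) :
      Step Q (.runHead t) none (.data .dollar) (enc t.push.2) (.idle t.tgt none)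
  | run₂_rot (t : Transition Q) (d) : Step Q (.run₂ t) none (.data (.val d)) [.val d] (.run₂ t)
  | run₂_dollar (t : Transition Q) :
      Step Q (.run₂ t) none (.data .dollar) (enc t.push.2) (.idle t.tgt none)

def toQA (Q : QA2 S A D) : QA (Ctrl Q) A (Letter D) where
  tr := Step Q
  init := .start
  fin m := Q.fin m.state

lemma toQA_finiteTrans [Finite S] [Finite D] {Q : QA2 S A D} (hQ : Q.FiniteTrans) :
    Q.toQA.FiniteTrans := by
  have := finite_transition hQ
  obtain ⟨N, hN⟩ := (Set.finite_range fun t : Transition Q =>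
    t.push.1.length + t.push.2.length).bddAbove
  have hlen (t : Transition Q) : t.push.1.length + t.push.2.length ≤ N := hN ⟨t, rfl⟩
  refine (Set.finite_univ.prod (((Set.finite_range (Transition.act (Q := Q))).insert none).prod
    (Set.finite_univ.prod ((List.finite_length_le _ (N + 2)).prod Set.finite_univ)))).subset ?_
  rintro ⟨m, a, h, δ, m'⟩ hM
  simp only [Set.mem_prod, Set.mem_univ, Set.mem_insert_iff, Set.mem_range, Set.mem_ofPred_eq,
    true_and, and_true]
  cases hM <;> simp <;> grind

/-- The queue holds `enc δ₂ ++ [hash] ++ enc δ₁` for queues `δ₁, δ₂`, so the first queue is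
read first. The `run t` states already represent the configuration reached by `t`. -/
inductive Represents (Q : QA2 S A D) : S × List D × List D → Ctrl Q × List (Letter D) → Prop
  | start : Represents Q (Q.init, [], []) (.start, [])
  | idle (s δ₁ δ₂ i) (hi : i = none ∨ i = some δ₂.getLast?) :
      Represents Q (s, δ₁, δ₂) (.idle s i, enc δ₂ ++ [.hash] ++ enc δ₁)
  | scan₁ (s δa δb δ₂) :
      Represents Q (s, δa ++ δb, δ₂)
        (.scan₁ s, enc δb ++ [.dollar] ++ enc δ₂ ++ [.hash] ++ enc δa)
  | scanHead (s δ₁ δ₂) :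
      Represents Q (s, δ₁, δ₂) (.scanHead s, [.hash] ++ enc δ₁ ++ [.dollar] ++ enc δ₂)
  | scan₂ (s δ₁ ζa ζb d) :
      Represents Q (s, δ₁, ζa ++ ζb ++ [d])
        (.scan₂ s d, enc ζb ++ [.val d, .hash] ++ enc δ₁ ++ [.dollar] ++ enc ζa)
  | run₁ (t : Transition Q) (δa δb δ₂ δ₂') (h₂ : QStep t.head.2 t.push.2 δ₂ δ₂') :
      Represents Q (t.tgt, t.push.1 ++ (δa ++ δb), δ₂')
        (.run₁ t, enc δb ++ [.dollar] ++ enc δ₂ ++ [.hash] ++ enc δa)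
  | runHead (t : Transition Q) (δ₁ δ₂ δ₂') (h₂ : QStep t.head.2 t.push.2 δ₂ δ₂') :
      Represents Q (t.tgt, t.push.1 ++ δ₁, δ₂')
        (.runHead t, [.hash] ++ enc t.push.1 ++ enc δ₁ ++ [.dollar] ++ enc δ₂)
  | run₂ (t : Transition Q) (δ₁ ζa ζb) :
      Represents Q (t.tgt, δ₁, t.push.2 ++ (ζa ++ ζb))
        (.run₂ t, enc ζb ++ [.hash] ++ enc δ₁ ++ [.dollar] ++ enc ζa)

variable {Q : QA2 S A D}

lemma Represents.state_eq {c m} (h : Represents Q c m) : m.1.state = c.1 := by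
  cases h <;> rfl

lemma proc_tr_of_step {m m' : Ctrl Q} {a h δ w w'} (hm : Step Q m a h δ m')
    (hq : QStep h δ w w') : Q.toQA.proc.tr (m, w) a (m', w') :=
  ⟨h, δ, hm, hq⟩

lemma tauStar_rotate {m : Ctrl Q} (hrot : ∀ d, Step Q m none (.data (.val d)) [.val d] m)
    (γ : List D) (W : List (Letter D)) :
    Q.toQA.proc.tauStar (m, W ++ enc γ) (m, enc γ ++ W) := by
  induction γ using List.reverseRecOn generalizing W with
  | nil => simpa using .refl
  | append_singleton γ d ih =>
    refine .head (proc_tr_of_step (hrot d) (.of_eq_data (ζ := W ++ enc γ) (by simp) rfl)) ?_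
    simpa [LTS.tauStar] using ih (.val d :: W)

lemma tauStar_scanHead (s : S) (δ₁ δ₂ : List D) :
    Q.toQA.proc.tauStar (.scanHead s, [.hash] ++ enc δ₁ ++ [.dollar] ++ enc δ₂)
      (.idle s (some δ₂.getLast?), enc δ₂ ++ [.hash] ++ enc δ₁) := by
  rcases List.eq_nil_or_concat' δ₂ with rfl | ⟨ζ, d, rfl⟩
  · exact .single (proc_tr_of_step (.scanHead_dollar s)
      (.of_eq_data (ζ := [.hash] ++ enc δ₁) (by simp) (by simp)))
  rw [List.getLast?_concat]
  refine .head (proc_tr_of_step (.scanHead_val s d)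
    (.of_eq_data (ζ := [.hash] ++ enc δ₁ ++ [.dollar] ++ enc ζ)
      (w' := [.val d, .hash] ++ enc δ₁ ++ [.dollar] ++ enc ζ) (by simp) (by simp))) ?_
  refine .trans (tauStar_rotate (.scan₂_rot s d) ζ _) (.single ?_)
  exact proc_tr_of_step (.scan₂_dollar s d)
    (.of_eq_data (ζ := enc ζ ++ [.val d, .hash] ++ enc δ₁) (by simp) (by simp))

lemma tauStar_scan₁ (s : S) (δa δb δ₂ : List D) :
    Q.toQA.proc.tauStar (.scan₁ s, enc δb ++ [.dollar] ++ enc δ₂ ++ [.hash] ++ enc δa)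
      (.idle s (some δ₂.getLast?), enc δ₂ ++ [.hash] ++ enc (δa ++ δb)) := by
  refine .trans (tauStar_rotate (.scan₁_rot s) δa _) ?_
  refine .head (proc_tr_of_step (.scan₁_hash s)
    (.of_eq_data (ζ := enc δa ++ enc δb ++ [.dollar] ++ enc δ₂) (by simp) rfl)) ?_
  simpa [LTS.tauStar] using tauStar_scanHead s (δa ++ δb) δ₂

lemma tauStar_scan (s : S) (δ₁ δ₂ : List D) :
    Q.toQA.proc.tauStar (.idle s none, enc δ₂ ++ [.hash] ++ enc δ₁)
      (.idle s (some δ₂.getLast?), enc δ₂ ++ [.hash] ++ enc δ₁) := by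
  refine .head (proc_tr_of_step (.scan s) (.of_eq_star rfl)) ?_
  simpa [LTS.tauStar] using tauStar_scan₁ s δ₁ [] δ₂

lemma tauStar_run₂ (t : Transition Q) (δ₁ ζa ζb : List D) :
    Q.toQA.proc.tauStar (.run₂ t, enc ζb ++ [.hash] ++ enc δ₁ ++ [.dollar] ++ enc ζa)
      (.idle t.tgt none, enc (t.push.2 ++ (ζa ++ ζb)) ++ [.hash] ++ enc δ₁) := by
  refine .trans (tauStar_rotate (.run₂_rot t) ζa _) (.single ?_)
  exact proc_tr_of_step (.run₂_dollar t)
    (.of_eq_data (ζ := enc ζa ++ enc ζb ++ [.hash] ++ enc δ₁) (by simp) (by simp))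

lemma tauStar_runHead (t : Transition Q) {δ₁ δ₂ δ₂' : List D}
    (h₂ : QStep t.head.2 t.push.2 δ₂ δ₂') :
    Q.toQA.proc.tauStar (.runHead t, [.hash] ++ enc t.push.1 ++ enc δ₁ ++ [.dollar] ++ enc δ₂)
      (.idle t.tgt none, enc δ₂' ++ [.hash] ++ enc (t.push.1 ++ δ₁)) := by
  generalize ht : t.head.2 = h at h₂
  cases h₂ with
  | emp =>
    exact .single (proc_tr_of_step (.runHead_emp t ht)
      (.of_eq_data (ζ := [.hash] ++ enc t.push.1 ++ enc δ₁) (by simp) (by simp)))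
  | data d δ ζ =>
    refine .head (proc_tr_of_step (.runHead_val t ht)
      (.of_eq_data (ζ := [.hash] ++ enc t.push.1 ++ enc δ₁ ++ [.dollar] ++ enc ζ) (by simp) rfl)) ?_
    simpa [LTS.tauStar] using tauStar_run₂ t (t.push.1 ++ δ₁) ζ []
  | star δ ζ =>
    refine .head (proc_tr_of_step (.runHead_star t ht) (.of_eq_star rfl)) ?_
    simpa [LTS.tauStar] using tauStar_run₂ t (t.push.1 ++ δ₁) δ₂ []

lemma tauStar_run₁ (t : Transition Q) {δa δb δ₂ δ₂' : List D}
    (h₂ : QStep t.head.2 t.push.2 δ₂ δ₂') :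
    Q.toQA.proc.tauStar (.run₁ t, enc δb ++ [.dollar] ++ enc δ₂ ++ [.hash] ++ enc δa)
      (.idle t.tgt none, enc δ₂' ++ [.hash] ++ enc (t.push.1 ++ (δa ++ δb))) := by
  refine .trans (tauStar_rotate (.run₁_rot t) δa _) ?_
  refine .head (proc_tr_of_step (.run₁_hash t)
    (.of_eq_data (ζ := enc δa ++ enc δb ++ [.dollar] ++ enc δ₂) (by simp) rfl)) ?_
  simpa [LTS.tauStar] using tauStar_runHead t (δ₁ := δa ++ δb) h₂

lemma Represents.tauStar_idle {c m} (h : Represents Q c m) :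
    Q.toQA.proc.tauStar m (.idle c.1 (some c.2.2.getLast?), enc c.2.2 ++ [.hash] ++ enc c.2.1) := by
  cases h with
  | start =>
    refine .head (proc_tr_of_step .start (.emp _)) ?_
    simpa [LTS.tauStar] using tauStar_scan Q.init [] []
  | idle s δ₁ δ₂ i hi =>
    rcases hi with rfl | rfl
    exacts [tauStar_scan s δ₁ δ₂, .refl]
  | scan₁ s δa δb δ₂ => exact tauStar_scan₁ s δa δb δ₂
  | scanHead s δ₁ δ₂ => exact tauStar_scanHead s δ₁ δ₂
  | scan₂ s δ₁ ζa ζb d =>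
    simp only [List.getLast?_concat]
    refine .trans (tauStar_rotate (.scan₂_rot s d) ζa _) (.single ?_)
    exact proc_tr_of_step (.scan₂_dollar s d)
      (.of_eq_data (ζ := enc ζa ++ (enc ζb ++ [.val d, .hash] ++ enc δ₁)) (by simp) (by simp))
  | run₁ t δa δb δ₂ δ₂' h₂ => exact (tauStar_run₁ t h₂).trans (tauStar_scan _ _ _)
  | runHead t δ₁ δ₂ δ₂' h₂ => exact (tauStar_runHead t h₂).trans (tauStar_scan _ _ _)
  | run₂ t δ₁ ζa ζb => exact (tauStar_run₂ t δ₁ ζa ζb).trans (tauStar_scan _ _ _)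

lemma exists_fire (t : Transition Q) {δ₁ δ₂ δ₁' δ₂' : List D}
    (h₁ : QStep t.head.1 t.push.1 δ₁ δ₁') (h₂ : QStep t.head.2 t.push.2 δ₂ δ₂') :
    ∃ m', Q.toQA.proc.tr (.idle t.src (some δ₂.getLast?), enc δ₂ ++ [.hash] ++ enc δ₁) t.act m' ∧
      Represents Q (t.tgt, δ₁', δ₂') m' := by
  have hen := h₂.enabled_getLast?
  generalize ht : t.head.1 = h at h₁
  cases h₁ with
  | emp =>
    refine ⟨_, proc_tr_of_step (.fire_emp t _ ht hen) (.of_eq_data (ζ := enc δ₂) (by simp) rfl), ?_⟩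
    simpa using Represents.runHead t [] δ₂ δ₂' h₂
  | data d δ ζ =>
    refine ⟨_, proc_tr_of_step (.fire_val t _ ht hen)
      (.of_eq_data (ζ := enc δ₂ ++ [.hash] ++ enc ζ) (by simp) rfl), ?_⟩
    simpa using Represents.run₁ t ζ [] δ₂ δ₂' h₂
  | star δ ζ =>
    refine ⟨_, proc_tr_of_step (.fire_star t _ ht hen) (.of_eq_star rfl), ?_⟩
    simpa using Represents.run₁ t δ₁ [] δ₂ δ₂' h₂

lemma Represents.forward {c m} (hR : Represents Q c m) {a c'} (hc : Q.proc.tr c a c') :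
    ∃ m'' m', Q.toQA.proc.tauStar m m'' ∧ Q.toQA.proc.tr m'' a m' ∧
      Represents Q c m'' ∧ Represents Q c' m' := by
  obtain ⟨h, δn, htr, h₁, h₂⟩ := hc
  obtain ⟨m', hstep, hR'⟩ := exists_fire ⟨c.1, a, h, δn, c'.1, htr⟩ h₁ h₂
  exact ⟨_, m', hR.tauStar_idle, hstep, .idle _ _ _ _ (.inr rfl), hR'⟩

section backward

variable {a : Option A} {h : Head (Letter D)} {δ w' : List (Letter D)} {m' : Ctrl Q}

lemma backward_start (hM : Step Q .start a h δ m') (hq : QStep h δ [] w') :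
    a = none ∧ Represents Q (Q.init, [], []) (m', w') := by
  cases hM
  obtain ⟨-, rfl⟩ := hq.emp_inv
  exact ⟨rfl, by simpa using Represents.idle Q.init [] [] none (.inl rfl)⟩

lemma backward_idle {s : S} {δ₁ δ₂ : List D} {i} (hi : i = none ∨ i = some δ₂.getLast?)
    (hM : Step Q (.idle s i) a h δ m') (hq : QStep h δ (enc δ₂ ++ [.hash] ++ enc δ₁) w') :
    (a = none ∧ Represents Q (s, δ₁, δ₂) (m', w')) ∨
      ∃ c', Q.proc.tr (s, δ₁, δ₂) a c' ∧ Represents Q c' (m', w') := by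
  cases hM with
  | scan =>
    rw [hq.star_inv]
    exact .inl ⟨rfl, by simpa using Represents.scan₁ s δ₁ [] δ₂⟩
  | fire_val t _ h₁ hen =>
    obtain ⟨δ₂', h₂⟩ := exists_qStep_of_enabled hen hi t.push.2
    obtain ⟨δ₁, rfl, rfl⟩ := hq.dequeue_val nofun
    refine .inr ⟨(t.tgt, t.push.1 ++ δ₁, δ₂'),
      ⟨t.head, t.push, t.mem, by rw [h₁]; exact .data _ _ _, h₂⟩, ?_⟩
    simpa using Represents.run₁ t δ₁ [] δ₂ δ₂' h₂
  | fire_star t _ h₁ hen =>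
    obtain ⟨δ₂', h₂⟩ := exists_qStep_of_enabled hen hi t.push.2
    rw [hq.star_inv]
    refine .inr ⟨(t.tgt, t.push.1 ++ δ₁, δ₂'),
      ⟨t.head, t.push, t.mem, by rw [h₁]; exact .star _ _, h₂⟩, ?_⟩
    simpa using Represents.run₁ t δ₁ [] δ₂ δ₂' h₂
  | fire_emp t _ h₁ hen =>
    obtain ⟨δ₂', h₂⟩ := exists_qStep_of_enabled hen hi t.push.2
    obtain ⟨rfl, -, rfl⟩ := hq.dequeue_sep nofun
    refine .inr ⟨(t.tgt, t.push.1, δ₂'), ⟨t.head, t.push, t.mem, by rw [h₁]; exact .emp _, h₂⟩, ?_⟩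
    simpa using Represents.runHead t [] δ₂ δ₂' h₂

lemma backward_scan₁ {s : S} {δa δb δ₂ : List D} (hM : Step Q (.scan₁ s) a h δ m')
    (hq : QStep h δ (enc δb ++ [.dollar] ++ enc δ₂ ++ [.hash] ++ enc δa) w') :
    a = none ∧ Represents Q (s, δa ++ δb, δ₂) (m', w') := by
  cases hM with
  | scan₁_rot _ d =>
    obtain ⟨δa, rfl, rfl⟩ := hq.dequeue_val nofun
    exact ⟨rfl, by simpa using Represents.scan₁ s δa (d :: δb) δ₂⟩
  | scan₁_hash =>
    obtain ⟨rfl, -, rfl⟩ := hq.dequeue_sep nofun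
    exact ⟨rfl, by simpa using Represents.scanHead s δb δ₂⟩

lemma backward_scanHead {s : S} {δ₁ δ₂ : List D} (hM : Step Q (.scanHead s) a h δ m')
    (hq : QStep h δ ([.hash] ++ enc δ₁ ++ [.dollar] ++ enc δ₂) w') :
    a = none ∧ Represents Q (s, δ₁, δ₂) (m', w') := by
  cases hM with
  | scanHead_dollar =>
    obtain ⟨rfl, -, rfl⟩ := hq.dequeue_sep nofun
    exact ⟨rfl, by simpa using Represents.idle s δ₁ [] (some none) (.inr rfl)⟩
  | scanHead_val _ d =>
    obtain ⟨ζ, rfl, rfl⟩ := hq.dequeue_val nofun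
    exact ⟨rfl, by simpa using Represents.scan₂ s δ₁ ζ [] d⟩

lemma backward_scan₂ {s : S} {d : D} {δ₁ ζa ζb : List D} (hM : Step Q (.scan₂ s d) a h δ m')
    (hq : QStep h δ (enc ζb ++ [.val d, .hash] ++ enc δ₁ ++ [.dollar] ++ enc ζa) w') :
    a = none ∧ Represents Q (s, δ₁, ζa ++ ζb ++ [d]) (m', w') := by
  cases hM with
  | scan₂_rot _ _ e =>
    obtain ⟨ζa, rfl, rfl⟩ := hq.dequeue_val nofun
    exact ⟨rfl, by simpa using Represents.scan₂ s δ₁ ζa (e :: ζb) d⟩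
  | scan₂_dollar =>
    obtain ⟨rfl, -, rfl⟩ := hq.dequeue_sep nofun
    exact ⟨rfl, by simpa using Represents.idle s δ₁ (ζb ++ [d]) _ (.inr rfl)⟩

lemma backward_run₁ {t : Transition Q} {δa δb δ₂ δ₂' : List D}
    (h₂ : QStep t.head.2 t.push.2 δ₂ δ₂') (hM : Step Q (.run₁ t) a h δ m')
    (hq : QStep h δ (enc δb ++ [.dollar] ++ enc δ₂ ++ [.hash] ++ enc δa) w') :
    a = none ∧ Represents Q (t.tgt, t.push.1 ++ (δa ++ δb), δ₂') (m', w') := by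
  cases hM with
  | run₁_rot _ d =>
    obtain ⟨δa, rfl, rfl⟩ := hq.dequeue_val nofun
    exact ⟨rfl, by simpa using Represents.run₁ t δa (d :: δb) δ₂ δ₂' h₂⟩
  | run₁_hash =>
    obtain ⟨rfl, -, rfl⟩ := hq.dequeue_sep nofun
    exact ⟨rfl, by simpa using Represents.runHead t δb δ₂ δ₂' h₂⟩

lemma backward_runHead {t : Transition Q} {δ₁ δ₂ δ₂' : List D}
    (h₂ : QStep t.head.2 t.push.2 δ₂ δ₂') (hM : Step Q (.runHead t) a h δ m')
    (hq : QStep h δ ([.hash] ++ enc t.push.1 ++ enc δ₁ ++ [.dollar] ++ enc δ₂) w') :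
    a = none ∧ Represents Q (t.tgt, t.push.1 ++ δ₁, δ₂') (m', w') := by
  cases hM with
  | runHead_val _ hd =>
    obtain ⟨ζ, rfl, rfl⟩ := (hd ▸ h₂).data_inv
    obtain ⟨ζ', hζ, rfl⟩ := hq.dequeue_val nofun
    obtain rfl := (List.append_singleton_inj.1 hζ).1
    exact ⟨rfl, by simpa using Represents.run₂ t (t.push.1 ++ δ₁) ζ []⟩
  | runHead_star _ hs =>
    obtain rfl := (hs ▸ h₂).star_inv
    rw [hq.star_inv]
    exact ⟨rfl, by simpa using Represents.run₂ t (t.push.1 ++ δ₁) δ₂ []⟩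
  | runHead_emp _ he =>
    obtain ⟨rfl, rfl⟩ := (he ▸ h₂).emp_inv
    obtain ⟨-, -, rfl⟩ := hq.dequeue_sep nofun
    exact ⟨rfl, by simpa using Represents.idle t.tgt (t.push.1 ++ δ₁) t.push.2 none (.inl rfl)⟩

lemma backward_run₂ {t : Transition Q} {δ₁ ζa ζb : List D} (hM : Step Q (.run₂ t) a h δ m')
    (hq : QStep h δ (enc ζb ++ [.hash] ++ enc δ₁ ++ [.dollar] ++ enc ζa) w') :
    a = none ∧ Represents Q (t.tgt, δ₁, t.push.2 ++ (ζa ++ ζb)) (m', w') := by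
  cases hM with
  | run₂_rot _ d =>
    obtain ⟨ζa, rfl, rfl⟩ := hq.dequeue_val nofun
    exact ⟨rfl, by simpa using Represents.run₂ t δ₁ ζa (d :: ζb)⟩
  | run₂_dollar =>
    obtain ⟨rfl, -, rfl⟩ := hq.dequeue_sep nofun
    exact ⟨rfl, by simpa using Represents.idle t.tgt δ₁ (t.push.2 ++ ζb) none (.inl rfl)⟩

end backward

lemma Represents.backward {c m} (hR : Represents Q c m) {a m'} (hm : Q.toQA.proc.tr m a m') :
    (a = none ∧ Represents Q c m') ∨ ∃ c', Q.proc.tr c a c' ∧ Represents Q c' m' := by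
  obtain ⟨h, δ, hM, hq⟩ := hm
  cases hR with
  | start => exact .inl (backward_start hM hq)
  | idle s δ₁ δ₂ i hi => exact backward_idle hi hM hq
  | scan₁ => exact .inl (backward_scan₁ hM hq)
  | scanHead => exact .inl (backward_scanHead hM hq)
  | scan₂ => exact .inl (backward_scan₂ hM hq)
  | run₁ _ _ _ _ _ h₂ => exact .inl (backward_run₁ h₂ hM hq)
  | runHead _ _ _ _ h₂ => exact .inl (backward_runHead h₂ hM hq)
  | run₂ => exact .inl (backward_run₂ hM hq)

theorem isBBisimSys_represents (Q : QA2 S A D) : IsBBisimSys Q.proc Q.toQA.proc (Represents Q) :=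
  .of_forward_backward (fun _ _ hR _ _ => hR.forward) (fun _ _ hR _ _ => hR.backward)
    (fun _ _ hR => show Q.fin _ ↔ Q.fin _ by rw [hR.state_eq])

end QA2

theorem two_queues_to_one_general {S A D : Type} [Finite S] [Finite D]
    (Q : QA2 S A D) (hQ : Q.FiniteTrans) :
    ∃ (S' D' : Type) (_ : Finite S') (_ : Finite D') (M : QA S' A D'),
      M.FiniteTrans ∧
      BBisimSys Q.proc (Q.init, [], []) M.proc (M.init, []) :=
  have := QA2.finite_transition hQ
  ⟨_, _, inferInstance, inferInstance, Q.toQA, QA2.toQA_finiteTrans hQ,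
    QA2.Represents Q, QA2.isBBisimSys_represents Q, .start⟩

/-- For every queue automaton with two queues there exists a
single-queue automaton whose process graph is branching bisimilar. -/
theorem two_queues_to_one {S A D : Type} [Finite S] [Finite A] [Finite D]
    (Q : QA2 S A D) (hQ : Q.FiniteTrans) :
    ∃ (S' D' : Type) (_ : Finite S') (_ : Finite D') (M : QA S' A D'),
      M.FiniteTrans ∧
      BBisimSys Q.proc (Q.init, [], []) M.proc (M.init, []) :=
  two_queues_to_one_general Q hQ
end

section
/- The queue automaton of Figure 1 accepts exactly the language { ww | w ∈ {a,b}* }: its language, defined via its process graph, equals { ww | w ∈ {a,b}* }. -/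
inductive AB where
  | a : AB
  | b : AB

inductive StWW where
  | s0 : StWW
  | s1 : StWW
  | s2 : StWW

/-- Transitions of the queue automaton of Figure 1. -/
inductive wwTr : StWW → Option AB → Head AB → List AB → StWW → Prop
  | load (d : AB) : wwTr StWW.s0 (some d) Head.star [d] StWW.s0
  | switch (d : AB) : wwTr StWW.s0 (some d) (Head.data d) [] StWW.s1
  | switchEmp : wwTr StWW.s0 none Head.emp [] StWW.s1
  | unload (d : AB) : wwTr StWW.s1 (some d) (Head.data d) [] StWW.s1
  | done : wwTr StWW.s1 none Head.emp [] StWW.s2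

/-- The queue automaton of Figure 1. -/
def wwQA : QA StWW AB AB :=
  { tr := wwTr, init := StWW.s0, fin := fun s => s = StWW.s2 }

/-! From each configuration `(s, δ)` the accepted words are explicit (`configLang`): from `s2`
only `ε`; from `s1` the queue read out, `δ.reverse`; from `s0` a loaded word `u` followed by the
queue `u.reverse ++ δ` read out, i.e. `u ++ δ.reverse ++ u`. This description is preserved by
stepping backwards along any transition, which gives `⊆`; conversely each such word is produced by
loading `u`, switching and unloading. At `(s0, [])` it is `{u ++ u}`. -/

namespace LTS

variable {S A : Type} (L : LTS S A)

theorem nil_mem_lang {s : S} (h : L.fin s) : [] ∈ L.lang s :=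
  ⟨s, .refl s, h⟩

theorem cons_mem_lang {s t : S} {a : A} {w : List A} (h : L.tr s (some a) t)
    (hw : w ∈ L.lang t) : a :: w ∈ L.lang s :=
  let ⟨u, hu, hf⟩ := hw
  ⟨u, .act h hu, hf⟩

theorem mem_lang_of_tau {s t : S} {w : List A} (h : L.tr s none t) (hw : w ∈ L.lang t) :
    w ∈ L.lang s :=
  let ⟨u, hu, hf⟩ := hw
  ⟨u, .tau h hu, hf⟩

theorem lang_subset_of_closed {P : S → Set (List A)} (hfin : ∀ s, L.fin s → [] ∈ P s)
    (hact : ∀ s a t w, L.tr s (some a) t → w ∈ P t → a :: w ∈ P s)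
    (htau : ∀ s t w, L.tr s none t → w ∈ P t → w ∈ P s) (s : S) : L.lang s ⊆ P s := by
  rintro w ⟨t, hw, ht⟩
  induction hw with
  | refl => exact hfin _ ht
  | act h _ ih => exact hact _ _ _ _ h (ih ht)
  | tau h _ ih => exact htau _ _ _ h (ih ht)

end LTS

namespace wwQA

open StWW

def configLang : StWW × List AB → Set (List AB)
  | (s0, δ) => {w | ∃ u, w = u ++ δ.reverse ++ u}
  | (s1, δ) => {δ.reverse}
  | (s2, _) => {[]}

theorem tr_load (d : AB) (δ : List AB) : wwQA.proc.tr (s0, δ) (some d) (s0, d :: δ) :=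
  ⟨.star, [d], .load d, .star [d] δ⟩

theorem tr_switch (d : AB) (ζ : List AB) : wwQA.proc.tr (s0, ζ ++ [d]) (some d) (s1, ζ) :=
  ⟨.data d, [], .switch d, .data d [] ζ⟩

theorem tr_switchEmp : wwQA.proc.tr (s0, []) none (s1, []) :=
  ⟨.emp, [], .switchEmp, .emp []⟩

theorem tr_unload (d : AB) (ζ : List AB) : wwQA.proc.tr (s1, ζ ++ [d]) (some d) (s1, ζ) :=
  ⟨.data d, [], .unload d, .data d [] ζ⟩

theorem tr_done : wwQA.proc.tr (s1, []) none (s2, []) :=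
  ⟨.emp, [], .done, .emp []⟩

theorem cons_mem_configLang {c c' : StWW × List AB} {x : AB} {w : List AB}
    (h : wwQA.proc.tr c (some x) c') (hw : w ∈ configLang c') : x :: w ∈ configLang c := by
  obtain ⟨p, δ⟩ := c
  obtain ⟨p', δ'⟩ := c'
  obtain ⟨_, _, htr, hq⟩ := h
  cases htr <;> cases hq
  case load.star =>
    obtain ⟨u, rfl⟩ := hw
    exact ⟨x :: u, by simp⟩
  case switch.data =>
    obtain rfl : w = δ'.reverse := hw
    exact ⟨[], by simp⟩
  case unload.data =>
    obtain rfl : w = δ'.reverse := hw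
    simp [configLang]

theorem mem_configLang_of_tau {c c' : StWW × List AB} {w : List AB}
    (h : wwQA.proc.tr c none c') (hw : w ∈ configLang c') : w ∈ configLang c := by
  obtain ⟨p, δ⟩ := c
  obtain ⟨p', δ'⟩ := c'
  obtain ⟨_, _, htr, hq⟩ := h
  cases htr <;> cases hq
  case switchEmp.emp =>
    obtain rfl : w = [] := hw
    exact ⟨[], rfl⟩
  case done.emp => exact hw

theorem lang_subset_configLang (c : StWW × List AB) : wwQA.proc.lang c ⊆ configLang c :=
  wwQA.proc.lang_subset_of_closed (by rintro ⟨p, δ⟩ (rfl : p = s2); rfl)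
    (fun _ _ _ _ => cons_mem_configLang) (fun _ _ _ => mem_configLang_of_tau) c

theorem reverse_mem_lang_s1 (δ : List AB) : δ.reverse ∈ wwQA.proc.lang (s1, δ) := by
  induction δ using List.reverseRecOn with
  | nil => exact wwQA.proc.mem_lang_of_tau tr_done (wwQA.proc.nil_mem_lang rfl)
  | append_singleton ζ d ih => simpa using wwQA.proc.cons_mem_lang (tr_unload d ζ) ih

theorem reverse_mem_lang_s0 (δ : List AB) : δ.reverse ∈ wwQA.proc.lang (s0, δ) := by
  cases δ using List.reverseRecOn with
  | nil => exact wwQA.proc.mem_lang_of_tau tr_switchEmp (reverse_mem_lang_s1 [])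
  | append_singleton ζ d =>
    simpa using wwQA.proc.cons_mem_lang (tr_switch d ζ) (reverse_mem_lang_s1 ζ)

theorem append_reverse_append_mem_lang_s0 (u δ : List AB) :
    u ++ δ.reverse ++ u ∈ wwQA.proc.lang (s0, δ) := by
  induction u generalizing δ with
  | nil => simpa using reverse_mem_lang_s0 δ
  | cons x u ih => simpa using wwQA.proc.cons_mem_lang (tr_load x δ) (ih (x :: δ))

theorem configLang_subset_lang : ∀ c : StWW × List AB, configLang c ⊆ wwQA.proc.lang c
  | (s0, δ), _, ⟨u, hw⟩ => hw ▸ append_reverse_append_mem_lang_s0 u δ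
  | (s1, δ), _, rfl => reverse_mem_lang_s1 δ
  | (s2, _), _, rfl => wwQA.proc.nil_mem_lang rfl

theorem lang_eq_configLang (c : StWW × List AB) : wwQA.proc.lang c = configLang c :=
  (lang_subset_configLang c).antisymm (configLang_subset_lang c)

end wwQA

/-- The queue automaton of Figure 1 accepts exactly the language
`{ ww | w ∈ {a,b}* }`. -/
theorem wwQA_language :
    wwQA.proc.lang (wwQA.init, []) = { w : List AB | ∃ v : List AB, w = v ++ v } := by
  rw [wwQA.lang_eq_configLang]
  ext w
  simp [wwQA, wwQA.configLang]
end

section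
/- The queue automaton of Figure 2 accepts exactly the language { aⁿbⁿcⁿ | n > 0 }. -/
inductive ABC where
  | a : ABC
  | b : ABC
  | c : ABC

inductive D12 where
  | one : D12
  | two : D12

inductive StABC where
  | s0 : StABC
  | s1 : StABC
  | s2 : StABC
  | s3 : StABC

/-- Transitions of the queue automaton of Figure 2. -/
inductive abcTr : StABC → Option ABC → Head D12 → List D12 → StABC → Prop
  | la : abcTr StABC.s0 (some ABC.a) Head.star [D12.one] StABC.s0
  | b0 : abcTr StABC.s0 (some ABC.b) (Head.data D12.one) [D12.two] StABC.s1
  | b1 : abcTr StABC.s1 (some ABC.b) (Head.data D12.one) [D12.two] StABC.s1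
  | c1 : abcTr StABC.s1 (some ABC.c) (Head.data D12.two) [] StABC.s2
  | c2 : abcTr StABC.s2 (some ABC.c) (Head.data D12.two) [] StABC.s2
  | done : abcTr StABC.s2 none Head.emp [] StABC.s3

/-- The queue automaton of Figure 2. -/
def abcQA : QA StABC ABC D12 :=
  { tr := abcTr, init := StABC.s0, fin := fun s => s = StABC.s3 }

namespace WStep

variable {S A : Type} {L : LTS S A} {s t u : S} {w w' : List A}

theorem trans (h₁ : WStep L s w t) (h₂ : WStep L t w' u) : WStep L s (w ++ w') u := by
  induction h₁ with
  | refl => exact h₂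
  | act ht _ ih => exact act ht (ih h₂)
  | tau ht _ ih => exact tau ht (ih h₂)

theorem single {x : A} (h : L.tr s (some x) t) : WStep L s [x] t :=
  act h (refl t)

end WStep

namespace List

variable {α : Type*} {x y z : α} {k m : ℕ} {l : List α}

theorem exists_of_append_singleton_eq_replicate (h : l ++ [z] = replicate m y) :
    ∃ m', m = m' + 1 ∧ l = replicate m' y ∧ z = y := by
  obtain ⟨hlen, hl, hz⟩ := append_eq_replicate_iff.mp h
  exact ⟨l.length, by simpa using hlen.symm, hl, by simpa using hz⟩

theorem exists_of_append_singleton_eq_replicate_append_replicate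
    (h : l ++ [z] = replicate k x ++ replicate m y) :
    (∃ m', m = m' + 1 ∧ l = replicate k x ++ replicate m' y ∧ z = y) ∨
      (m = 0 ∧ ∃ k', k = k' + 1 ∧ l = replicate k' x ∧ z = x) := by
  cases m with
  | zero => exact .inr ⟨rfl, exists_of_append_singleton_eq_replicate (by simpa using h)⟩
  | succ m =>
    rw [replicate_succ', ← append_assoc] at h
    obtain ⟨hl, hz⟩ := append_inj' h rfl
    exact .inl ⟨m, rfl, hl, by simpa using hz⟩

end List

open List StABC ABC D12

theorem abcQA_tr_a (ζ : List D12) : abcQA.proc.tr (s0, ζ) (some a) (s0, one :: ζ) :=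
  ⟨.star, [one], abcTr.la, QStep.star [one] ζ⟩

theorem abcQA_tr_b₀ (ζ : List D12) : abcQA.proc.tr (s0, ζ ++ [one]) (some b) (s1, two :: ζ) :=
  ⟨.data one, [two], abcTr.b0, QStep.data one [two] ζ⟩

theorem abcQA_tr_b₁ (ζ : List D12) : abcQA.proc.tr (s1, ζ ++ [one]) (some b) (s1, two :: ζ) :=
  ⟨.data one, [two], abcTr.b1, QStep.data one [two] ζ⟩

theorem abcQA_tr_c₁ (ζ : List D12) : abcQA.proc.tr (s1, ζ ++ [two]) (some c) (s2, ζ) :=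
  ⟨.data two, [], abcTr.c1, QStep.data two [] ζ⟩

theorem abcQA_tr_c₂ (ζ : List D12) : abcQA.proc.tr (s2, ζ ++ [two]) (some c) (s2, ζ) :=
  ⟨.data two, [], abcTr.c2, QStep.data two [] ζ⟩

theorem abcQA_tr_done : abcQA.proc.tr (s2, []) none (s3, []) :=
  ⟨.emp, [], abcTr.done, QStep.emp []⟩

theorem abcQA_run_a (n : ℕ) :
    WStep abcQA.proc (s0, []) (replicate n a) (s0, replicate n one) := by
  induction n with
  | zero => exact .refl _
  | succ n ih =>
    simpa only [← replicate_succ, ← replicate_succ'] using ih.trans (.single (abcQA_tr_a _))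

theorem abcQA_run_b (m : ℕ) (ζ : List D12) :
    WStep abcQA.proc (s1, ζ ++ replicate m one) (replicate m b) (s1, replicate m two ++ ζ) := by
  induction m generalizing ζ with
  | zero => simpa using .refl _
  | succ m ih =>
    have run := ih (ζ ++ [one])
    rw [← append_assoc] at run
    simpa only [append_assoc, singleton_append, ← cons_append, ← replicate_succ,
      ← replicate_succ'] using run.trans (.single (abcQA_tr_b₁ _))

theorem abcQA_run_c (k : ℕ) : WStep abcQA.proc (s2, replicate k two) (replicate k c) (s2, []) := by
  induction k with
  | zero => exact .refl _
  | succ k ih =>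
    simpa only [← replicate_succ, ← replicate_succ'] using WStep.act (abcQA_tr_c₂ _) ih

theorem abcQA_accepts_replicate (n : ℕ) :
    replicate (n + 1) a ++ replicate (n + 1) b ++ replicate (n + 1) c ∈
      abcQA.proc.lang (abcQA.init, []) := by
  have run_a := abcQA_run_a (n + 1)
  rw [replicate_succ' (a := one)] at run_a
  have run := run_a.trans <| .act (abcQA_tr_b₀ _) <| (abcQA_run_b n [two]).trans <|
    .act (abcQA_tr_c₁ _) <| (abcQA_run_c n).trans <| .tau abcQA_tr_done (.refl _)
  refine ⟨(s3, []), ?_, rfl⟩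
  simpa [abcQA, replicate_succ] using run

/-- Constrains the words accepted from `(s, ζ)` only when `ζ` has the shape it has on runs from
the initial configuration: `1ᵐ` in `s0`, `2ᵏ1ᵐ` in `s1` and `2ᵏ` in `s2`. -/
def AcceptSpec : StABC → List D12 → List ABC → Prop
  | s0, ζ, w => ∀ m, ζ = replicate m one →
      ∃ j, 0 < m + j ∧ w = replicate j a ++ replicate (m + j) b ++ replicate (m + j) c
  | s1, ζ, w => ∀ k m, ζ = replicate k two ++ replicate m one →
      w = replicate m b ++ replicate (k + m) c
  | s2, ζ, w => ∀ k, ζ = replicate k two → w = replicate k c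
  | s3, _, w => w = []

theorem acceptSpec_of_tr {s s' : StABC} {ζ ζ' : List D12} {x : Option ABC} {w : List ABC}
    (h : abcQA.proc.tr (s, ζ) x (s', ζ')) (hw : AcceptSpec s' ζ' w) :
    AcceptSpec s ζ (x.toList ++ w) := by
  obtain ⟨_, _, htr, hq⟩ := h
  cases htr <;> cases hq <;>
    simp only [append_eq, nil_append, Option.toList_some, Option.toList_none] at hw ⊢
  case la =>
    rintro m rfl
    obtain ⟨j, -, rfl⟩ := hw (m + 1) rfl
    refine ⟨j + 1, by omega, ?_⟩
    rw [show m + 1 + j = m + (j + 1) by omega]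
    rfl
  case b0 ζ =>
    intro m hm
    obtain ⟨m, rfl, rfl, -⟩ := exists_of_append_singleton_eq_replicate hm
    refine ⟨0, by omega, ?_⟩
    simp [hw 1 m rfl, replicate_succ, add_comm]
  case b1 ζ =>
    intro k m hkm
    rcases exists_of_append_singleton_eq_replicate_append_replicate hkm with
      ⟨m, rfl, rfl, -⟩ | ⟨-, -, -, -, h⟩
    · rw [hw (k + 1) m rfl, show k + 1 + m = k + (m + 1) by omega]
      rfl
    · cases h
  case c1 =>
    intro k m hkm
    rcases exists_of_append_singleton_eq_replicate_append_replicate hkm with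
      ⟨-, -, -, h⟩ | ⟨rfl, k, rfl, rfl, -⟩
    · cases h
    · simp [hw k rfl, replicate_succ]
  case c2 =>
    intro k hk
    obtain ⟨k, rfl, rfl, -⟩ := exists_of_append_singleton_eq_replicate hk
    simp [hw k rfl, replicate_succ]
  case done =>
    intro k hk
    obtain rfl : k = 0 := by simpa using hk.symm
    exact hw

theorem acceptSpec_of_wStep {p q : StABC × List D12} {w : List ABC}
    (h : WStep abcQA.proc p w q) (hq : abcQA.proc.fin q) : AcceptSpec p.1 p.2 w := by
  induction h with
  | refl p =>
    obtain ⟨_, _⟩ := p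
    subst hq
    rfl
  | act htr _ ih => exact acceptSpec_of_tr htr (ih hq)
  | tau htr _ ih => exact acceptSpec_of_tr htr (ih hq)

/-- The queue automaton of Figure 2 accepts exactly the language
`{ aⁿbⁿcⁿ | n > 0 }`. -/
theorem abcQA_language :
    abcQA.proc.lang (abcQA.init, []) =
      { w : List ABC | ∃ n : ℕ, 0 < n ∧
          w = List.replicate n ABC.a ++ List.replicate n ABC.b ++ List.replicate n ABC.c } := by
  ext w
  constructor
  · rintro ⟨q, run, hq⟩
    obtain ⟨n, hn, rfl⟩ := acceptSpec_of_wStep run hq 0 rfl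
    exact ⟨n, by simpa using hn, by simp⟩
  · rintro ⟨n, hn, rfl⟩
    obtain ⟨n, rfl⟩ := Nat.exists_eq_add_of_lt hn
    simpa using abcQA_accepts_replicate n
end

section
/- For every reactive Turing machine there exists a queue automaton whose process graph is branching bisimilar to the process graph associated with the RTM. -/
/-- A reactive Turing machine; tape symbols are `Option D` with `none` the blank,
the `Bool` indicates the direction of the head move (`true` = right). -/
structure RTM (S A D : Type) where
  tr : S → Option A → Option D → Option D → Bool → S → Prop
  init : S
  fin : S → Prop

/-- Configurations: state, tape left of the head (nearest first), symbol under
the head, tape right of the head (nearest first); blanks at the extremes are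
implicit. -/
def RTM.proc {S A D : Type} (M : RTM S A D) :
    LTS (S × List (Option D) × Option D × List (Option D)) A where
  tr := fun c a c' => ∃ e,
    (M.tr c.1 a c.2.2.1 e false c'.1 ∧
      c'.2.1 = c.2.1.tail ∧ c'.2.2.1 = c.2.1.headD none ∧ c'.2.2.2 = e :: c.2.2.2) ∨
    (M.tr c.1 a c.2.2.1 e true c'.1 ∧
      c'.2.1 = e :: c.2.1 ∧ c'.2.2.1 = c.2.2.2.headD none ∧ c'.2.2.2 = c.2.2.2.tail)
  fin := fun c => M.fin c.1

/-- The RTM has finitely many transitions. -/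
def RTM.FiniteTrans {S A D : Type} (M : RTM S A D) : Prop :=
  Set.Finite {x : S × Option A × Option D × Option D × Bool × S |
    M.tr x.1 x.2.1 x.2.2.1 x.2.2.2.1 x.2.2.2.2.1 x.2.2.2.2.2}

/-! The queue stores the tape as a cycle: the head cell at the front, an end marker separating the
two ends of the tape. A left move is a single dequeue/enqueue. A right move must reach the back of
the queue, so it enqueues a marker and rotates the whole queue by silent steps until the marker is
in front again. Every configuration passed during the rotation encodes the same machine
configuration up to rotation, so these silent steps are inert, and relating each machine
configuration to its encodings gives a branching bisimulation. -/

namespace List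

variable {α : Type*} {a b : α} {l l' u : List α}

theorem eq_of_cons_isRotated_cons (ha : a ∉ l) (h : a :: l ~r a :: l') : l = l' := by
  obtain ⟨n, hn, h⟩ := isRotated_iff_mod.1 h
  rcases n with _ | n
  · simpa using h
  rw [rotate_cons_succ] at h
  rcases (Nat.le_of_succ_le_succ hn).lt_or_eq with hlt | rfl
  · rw [rotate_eq_drop_append_take (by simp; omega), drop_append_of_le_length hlt.le,
      drop_eq_getElem_cons hlt, cons_append, cons_append, cons.injEq] at h
    exact absurd (h.1 ▸ getElem_mem hlt) ha
  · simpa using (rotate_append_length_eq l [a]).symm.trans h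

theorem cons_eq_of_append_pair_isRotated_cons (ha : a ∉ l) (h : u ++ [a, b] ~r a :: l) :
    b :: u = l :=
  (eq_of_cons_isRotated_cons ha (h.symm.trans isRotated_append)).symm

end List

section QueueSteps

variable {D : Type} {d : D} {δ q q' : List D}

theorem QStep.emp_iff_s15 : QStep .emp δ q q' ↔ q = [] ∧ q' = δ :=
  ⟨by rintro ⟨⟩; exact ⟨rfl, rfl⟩, by rintro ⟨rfl, rfl⟩; exact .emp _⟩

theorem QStep.data_iff_s15 : QStep (.data d) δ q q' ↔ ∃ ζ, q = ζ ++ [d] ∧ q' = δ ++ ζ :=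
  ⟨by rintro ⟨⟩; exact ⟨_, rfl, rfl⟩, by rintro ⟨ζ, rfl, rfl⟩; exact .data d δ ζ⟩

theorem QStep.star_iff_s15 : QStep .star δ q q' ↔ q' = δ ++ q :=
  ⟨by rintro ⟨⟩; rfl, by rintro rfl; exact .star δ q⟩

instance [Finite D] : Finite (Head D) :=
  Finite.of_surjective
    (fun x : Option (Option D) => x.elim .emp fun y => y.elim .star .data)
    (by
      rintro (_ | _ | d)
      exacts [⟨none, rfl⟩, ⟨some none, rfl⟩, ⟨some (some d), rfl⟩])

end QueueSteps

namespace RTM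

variable {S A D : Type}

theorem proc_tr_iff {M : RTM S A D} {s : S} {l : List (Option D)} {c : Option D}
    {r : List (Option D)} {a : Option A}
    {σ' : S × List (Option D) × Option D × List (Option D)} :
    M.proc.tr (s, l, c, r) a σ' ↔ ∃ e t,
      M.tr s a c e false t ∧ σ' = (t, l.tail, l.headD none, e :: r) ∨
      M.tr s a c e true t ∧ σ' = (t, e :: l, r.headD none, r.tail) := by
  obtain ⟨t, l', c', r'⟩ := σ'
  simp only [RTM.proc, Prod.mk.injEq]
  aesop

inductive QSym (D : Type) where
  | tape (d : Option D)
  | endMark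
  | headMark

inductive QState (S D : Type) where
  | start
  | ready (s : S)
  | holding (s : S) (c : Option D)
  | seeking (s : S) (w : QSym D)

instance [Finite D] : Finite (QSym D) :=
  Finite.of_surjective
    (fun x : Option D ⊕ Bool => x.elim .tape fun b => bif b then .headMark else .endMark)
    (by rintro (d | _ | _); exacts [⟨.inl d, rfl⟩, ⟨.inr false, rfl⟩, ⟨.inr true, rfl⟩])

instance [Finite S] [Finite D] : Finite (QState S D) :=
  Finite.of_surjective
    (fun x : Option (S ⊕ S × Option D ⊕ S × QSym D) =>
      x.elim .start <| Sum.elim .ready <|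
        Sum.elim (fun p => .holding p.1 p.2) fun p => .seeking p.1 p.2)
    (by
      rintro (_ | s | ⟨s, c⟩ | ⟨s, w⟩)
      exacts [⟨none, rfl⟩, ⟨some (.inl s), rfl⟩, ⟨some (.inr (.inl (s, c))), rfl⟩,
        ⟨some (.inr (.inr (s, w))), rfl⟩])

/-- Dequeuing (at the right end) reads the cells left of the head outwards, then the end marker,
then the cells right of the head inwards. -/
def tapeWord (l r : List (Option D)) : List (QSym D) :=
  r.map .tape ++ .endMark :: (l.map .tape).reverse

@[simp]
theorem tapeWord_cons_left (x : Option D) (l r : List (Option D)) :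
    tapeWord (x :: l) r = tapeWord l r ++ [.tape x] := by
  simp [tapeWord]

theorem tapeWord_nil_left (r : List (Option D)) : tapeWord [] r = r.map .tape ++ [.endMark] :=
  rfl

theorem headMark_not_mem_tapeWord (l r : List (Option D)) : .headMark ∉ tapeWord l r := by
  simp [tapeWord]

theorem headMark_not_mem_tape_cons_tapeWord (c : Option D) (l r : List (Option D)) :
    .headMark ∉ .tape c :: tapeWord l r := by
  simp [tapeWord]

/-- While `seeking`, the state buffers the last dequeued symbol and re-enqueues it one step later,
so that when `headMark` is dequeued the state holds the cell that was behind it: the new head. -/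
inductive QueueTr (M : RTM S A D) :
    QState S D → Option A → Head (QSym D) → List (QSym D) → QState S D → Prop
  | init : QueueTr M .start none .emp [.endMark, .tape none] (.ready M.init)
  | moveLeft {s a c e t} : M.tr s a c e false t →
      QueueTr M (.ready s) a (.data (.tape c)) [.tape e] (.ready t)
  | moveLeftHeld {s a c e t} : M.tr s a c e false t →
      QueueTr M (.holding s c) a .star [.tape e] (.ready t)
  | moveLeftAtEnd {s a e t} : M.tr s a none e false t →
      QueueTr M (.ready s) a (.data .endMark) [.headMark, .tape none, .tape e]
        (.seeking t .endMark)
  | moveRight {s a c e t} : M.tr s a c e true t →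
      QueueTr M (.ready s) a (.data (.tape c)) [.headMark] (.seeking t (.tape e))
  | moveRightHeld {s a c e t} : M.tr s a c e true t →
      QueueTr M (.holding s c) a .star [.headMark] (.seeking t (.tape e))
  | moveRightAtEnd {s a e t} : M.tr s a none e true t →
      QueueTr M (.ready s) a (.data .endMark) [.tape e, .headMark] (.seeking t .endMark)
  | rotate {s w x} : x ≠ .headMark → QueueTr M (.seeking s w) none (.data x) [w] (.seeking s x)
  | found {s d} : QueueTr M (.seeking s (.tape d)) none (.data .headMark) [] (.holding s d)
  | foundAtEnd {s} :
      QueueTr M (.seeking s .endMark) none (.data .headMark) [.endMark] (.holding s none)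

def toQA (M : RTM S A D) : QA (QState S D) A (QSym D) where
  tr := QueueTr M
  init := .start
  fin
    | .ready s | .holding s _ => M.fin s
    | _ => False

inductive Ready :
    S × List (Option D) × Option D × List (Option D) → QState S D × List (QSym D) → Prop
  | ready (s l c r) : Ready (s, l, c, r) (.ready s, tapeWord l r ++ [.tape c])
  /-- At the left end the blank under the head is not stored; the end marker is in front. -/
  | readyAtLeftEnd (s r) : Ready (s, [], none, r) (.ready s, tapeWord [] r)
  | holding (s l c r) : Ready (s, l, c, r) (.holding s c, tapeWord l r)

inductive SimRel (M : RTM S A D) :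
    S × List (Option D) × Option D × List (Option D) → QState S D × List (QSym D) → Prop
  | start : SimRel M (M.init, [], none, []) (.start, [])
  | ready {σ τ} : Ready σ τ → SimRel M σ τ
  | seeking (s l c r w q) : w ≠ .headMark → q ++ [w] ~r .headMark :: .tape c :: tapeWord l r →
      SimRel M (s, l, c, r) (.seeking s w, q)
  | seekingAtRightEnd (s l w q) : w ≠ .headMark → q ++ [w] ~r .headMark :: tapeWord l [] →
      SimRel M (s, l, none, []) (.seeking s w, q)

variable {M : RTM S A D} {σ σ' : S × List (Option D) × Option D × List (Option D)}
  {τ τ' : QState S D × List (QSym D)} {a : Option A}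

theorem toQA_proc_tr {p p' : QState S D} {h : Head (QSym D)}
    {δ q q' : List (QSym D)} (htr : M.QueueTr p a h δ p') (hq : QStep h δ q q') :
    M.toQA.proc.tr (p, q) a (p', q') :=
  ⟨h, δ, htr, hq⟩

theorem toQA_finiteTrans [Finite S] [Finite A] [Finite D] (M : RTM S A D) :
    M.toQA.FiniteTrans := by
  refine (Set.finite_univ.prod <| Set.finite_univ.prod <| Set.finite_univ.prod <|
    (List.finite_length_le _ 3).prod Set.finite_univ).subset ?_
  rintro ⟨p, a, h, δ, p'⟩ htr
  refine ⟨trivial, trivial, trivial, ?_, trivial⟩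
  change δ.length ≤ 3
  cases htr <;> simp

theorem simRel_moveLeft (t : S) (l : List (Option D)) (e : Option D) (r : List (Option D)) :
    SimRel M (t, l.tail, l.headD none, e :: r) (.ready t, tapeWord l (e :: r)) := by
  cases l with
  | nil => exact .ready (.readyAtLeftEnd t (e :: r))
  | cons x l => simpa using SimRel.ready (M := M) (.ready t l x (e :: r))

theorem simRel_moveRight_of_isRotated {t : S} {l : List (Option D)} {e : Option D}
    {r : List (Option D)} {w : QSym D} {q : List (QSym D)} (hw : w ≠ .headMark)
    (h : q ++ [w] ~r .headMark :: tapeWord (e :: l) r) :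
    SimRel M (t, e :: l, r.headD none, r.tail) (.seeking t w, q) := by
  cases r with
  | nil => exact .seekingAtRightEnd t (e :: l) w q hw h
  | cons x r => exact .seeking t (e :: l) x r w q hw h

theorem simRel_moveRight (t : S) (l : List (Option D)) (e : Option D) (r : List (Option D)) :
    SimRel M (t, e :: l, r.headD none, r.tail)
      (.seeking t (.tape e), .headMark :: tapeWord l r) := by
  refine simRel_moveRight_of_isRotated nofun ?_
  rw [tapeWord_cons_left]
  exact .refl _

theorem simRel_moveLeftAtEnd (t : S) (e : Option D) (r : List (Option D)) :
    SimRel M (t, [], none, e :: r)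
      (.seeking t .endMark, [.headMark, .tape none, .tape e] ++ r.map .tape) :=
  .seeking t [] none (e :: r) _ _ nofun (by simp [tapeWord]; exact .refl _)

theorem simRel_moveRightAtEnd (t : S) (e : Option D) (r : List (Option D)) :
    SimRel M (t, [e], r.headD none, r.tail)
      (.seeking t .endMark, [.tape e, .headMark] ++ r.map .tape) := by
  refine simRel_moveRight_of_isRotated nofun ?_
  rw [tapeWord_cons_left]
  exact List.IsRotated.cons_append_singleton

theorem Ready.fin_iff (h : Ready σ τ) : M.toQA.proc.fin τ ↔ M.proc.fin σ := by
  cases h <;> rfl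

theorem SimRel.fin (h : SimRel M σ τ) (hfin : M.toQA.proc.fin τ) : M.proc.fin σ := by
  cases h with
  | ready h => exact h.fin_iff.1 hfin
  | _ => exact hfin.elim

theorem Ready.forward (hτ : Ready σ τ) (hσ : M.proc.tr σ a σ') :
    ∃ τ', M.toQA.proc.tr τ a τ' ∧ SimRel M σ' τ' := by
  rcases hτ with ⟨s, l, c, r⟩ | ⟨s, r⟩ | ⟨s, l, c, r⟩ <;>
    obtain ⟨e, t, ⟨htr, rfl⟩ | ⟨htr, rfl⟩⟩ := proc_tr_iff.1 hσ
  · exact ⟨_, toQA_proc_tr (.moveLeft htr) (.data _ _ _), simRel_moveLeft t l e r⟩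
  · exact ⟨_, toQA_proc_tr (.moveRight htr) (.data _ _ _), simRel_moveRight t l e r⟩
  · exact ⟨_, toQA_proc_tr (.moveLeftAtEnd htr) (.data _ _ _), simRel_moveLeftAtEnd t e r⟩
  · exact ⟨_, toQA_proc_tr (.moveRightAtEnd htr) (.data _ _ _), simRel_moveRightAtEnd t e r⟩
  · exact ⟨_, toQA_proc_tr (.moveLeftHeld htr) (.star _ _), simRel_moveLeft t l e r⟩
  · exact ⟨_, toQA_proc_tr (.moveRightHeld htr) (.star _ _), simRel_moveRight t l e r⟩

theorem tauStar_seeking_append_headMark {s : S} {x : QSym D} {W : List (QSym D)}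
    (hW : .headMark ∉ x :: W) {z : List (QSym D)} (hz : .headMark ∉ z) :
    ∀ {y : List (QSym D)} {w : QSym D}, y ++ .headMark :: z ++ [w] ~r .headMark :: x :: W →
      M.toQA.proc.tauStar (.seeking s w, y ++ .headMark :: z)
        (.seeking s x, W ++ [.headMark]) := by
  induction z using List.reverseRecOn with
  | nil =>
    intro y w h
    obtain ⟨rfl, rfl⟩ := List.cons_eq_cons.1 <|
      List.cons_eq_of_append_pair_isRotated_cons hW (by simpa using h)
    exact .refl
  | append_singleton z x' ih =>
    intro y w h
    have hx' : x' ≠ .headMark := fun h => hz (by simp [h])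
    refine .head (toQA_proc_tr (.rotate hx') (QStep.data_iff_s15.2 ⟨_, by simp, rfl⟩))
      (ih (y := w :: y) (fun h => hz (by simp [h])) ?_)
    simpa using List.IsRotated.cons_append_singleton.trans h

theorem tauStar_seeking {s : S} {w x : QSym D} {W q : List (QSym D)} (hW : .headMark ∉ x :: W)
    (hw : w ≠ .headMark) (h : q ++ [w] ~r .headMark :: x :: W) :
    M.toQA.proc.tauStar (.seeking s w, q) (.seeking s x, W ++ [.headMark]) := by
  have hq : .headMark ∈ q := by simpa [hw.symm] using h.mem_iff.2 List.mem_cons_self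
  obtain ⟨y, z, rfl⟩ := List.append_of_mem hq
  have hperm : (QSym.headMark :: (y ++ (z ++ [w]))).Perm (.headMark :: x :: W) :=
    List.perm_middle.symm.trans (by simpa using h.perm)
  exact tauStar_seeking_append_headMark hW (fun hz => hW (hperm.cons_inv.subset (by simp [hz]))) h

theorem SimRel.exists_tauStar_ready (h : SimRel M σ τ) :
    ∃ τ', M.toQA.proc.tauStar τ τ' ∧ Ready σ τ' := by
  cases h with
  | start => exact ⟨_, .single (toQA_proc_tr .init (.emp _)), .ready M.init [] none []⟩
  | ready h => exact ⟨_, .refl, h⟩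
  | seeking s l c r w q hw h =>
    exact ⟨_, (tauStar_seeking (headMark_not_mem_tape_cons_tapeWord c l r) hw h).tail
      (toQA_proc_tr .found (.data _ _ _)), .holding s l c r⟩
  | seekingAtRightEnd s l w q hw h =>
    exact ⟨_, (tauStar_seeking (headMark_not_mem_tapeWord l []) hw h).tail
      (toQA_proc_tr .foundAtEnd (.data _ _ _)), .holding s l none []⟩

theorem Ready.backward (hτ : Ready σ τ) (hstep : M.toQA.proc.tr τ a τ') :
    ∃ σ', M.proc.tr σ a σ' ∧ SimRel M σ' τ' := by
  obtain ⟨p', q'⟩ := τ'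
  obtain ⟨h, δ, htr, hq⟩ := hstep
  rcases hτ with ⟨s, l, c, r⟩ | ⟨s, r⟩ | ⟨s, l, c, r⟩ <;>
    rcases htr with _ | htr | htr | htr | htr | htr | htr | _ | _ | _
  all_goals first
    | obtain rfl := QStep.star_iff_s15.1 hq
    | obtain ⟨ζ, hζ, rfl⟩ := QStep.data_iff_s15.1 hq
      simp only [tapeWord_nil_left, List.append_singleton_inj, QSym.tape.injEq, reduceCtorEq,
        and_false, and_true] at hζ
  · obtain ⟨rfl, rfl⟩ := hζ
    exact ⟨_, proc_tr_iff.2 ⟨_, _, .inl ⟨htr, rfl⟩⟩, simRel_moveLeft _ l _ r⟩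
  · obtain ⟨rfl, rfl⟩ := hζ
    exact ⟨_, proc_tr_iff.2 ⟨_, _, .inr ⟨htr, rfl⟩⟩, simRel_moveRight _ l _ r⟩
  · obtain rfl := hζ
    exact ⟨_, proc_tr_iff.2 ⟨_, _, .inl ⟨htr, rfl⟩⟩, simRel_moveLeftAtEnd _ _ r⟩
  · obtain rfl := hζ
    exact ⟨_, proc_tr_iff.2 ⟨_, _, .inr ⟨htr, rfl⟩⟩, simRel_moveRightAtEnd _ _ r⟩
  · exact ⟨_, proc_tr_iff.2 ⟨_, _, .inl ⟨htr, rfl⟩⟩, simRel_moveLeft _ l _ r⟩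
  · exact ⟨_, proc_tr_iff.2 ⟨_, _, .inr ⟨htr, rfl⟩⟩, simRel_moveRight _ l _ r⟩

theorem SimRel.backward (h : SimRel M σ τ) (hstep : M.toQA.proc.tr τ a τ') :
    ∃ σ', M.proc.optStep σ a σ' ∧ SimRel M σ' τ' := by
  obtain ⟨p', q'⟩ := τ'
  cases h with
  | start =>
    obtain ⟨_, _, ⟨⟩, hq⟩ := hstep
    obtain ⟨-, rfl⟩ := QStep.emp_iff_s15.1 hq
    exact ⟨_, .inr ⟨rfl, rfl⟩, .ready (.ready M.init [] none [])⟩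
  | ready h =>
    obtain ⟨σ', hσ', h'⟩ := h.backward hstep
    exact ⟨σ', .inl hσ', h'⟩
  | seeking s l c r w q _ h =>
    have hW := headMark_not_mem_tape_cons_tapeWord c l r
    obtain ⟨_, _, htr, hq⟩ := hstep
    rcases htr with _ | _ | _ | _ | _ | _ | _ | hx | _ | _ <;>
      obtain ⟨ζ, rfl, rfl⟩ := QStep.data_iff_s15.1 hq
    · exact ⟨_, .inr ⟨rfl, rfl⟩,
        .seeking s l c r _ _ hx ((List.isRotated_append (l := [w])).trans h)⟩
    · obtain ⟨⟨⟩, rfl⟩ := List.cons_eq_cons.1 <|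
        List.cons_eq_of_append_pair_isRotated_cons hW (by simpa using h)
      exact ⟨_, .inr ⟨rfl, rfl⟩, .ready (.holding s l c r)⟩
    · have := List.cons_eq_of_append_pair_isRotated_cons hW (by simpa using h)
      simp at this
  | seekingAtRightEnd s l w q _ h =>
    obtain ⟨_, _, htr, hq⟩ := hstep
    rcases htr with _ | _ | _ | _ | _ | _ | _ | hx | _ | _ <;>
      obtain ⟨ζ, rfl, rfl⟩ := QStep.data_iff_s15.1 hq
    · exact ⟨_, .inr ⟨rfl, rfl⟩,
        .seekingAtRightEnd s l _ _ hx ((List.isRotated_append (l := [w])).trans h)⟩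
    · have := List.cons_eq_of_append_pair_isRotated_cons (headMark_not_mem_tapeWord l [])
        (by simpa using h)
      simp [tapeWord] at this
    · obtain ⟨-, rfl⟩ := List.cons_eq_cons.1 <| List.cons_eq_of_append_pair_isRotated_cons
        (headMark_not_mem_tapeWord l []) (by simpa [tapeWord] using h)
      exact ⟨_, .inr ⟨rfl, rfl⟩, .ready (.holding s l none [])⟩

theorem isBBisimSys_simRel (M : RTM S A D) : IsBBisimSys M.proc M.toQA.proc (SimRel M) := by
  refine ⟨fun σ τ h => ⟨fun a σ' hσ => ?_, fun hfin => ?_⟩,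
    fun σ τ h => ⟨fun a τ' hτ => ?_, fun hfin => ⟨σ, .refl, h.fin hfin⟩⟩⟩
  · obtain ⟨τ₁, hτ₁, hready⟩ := h.exists_tauStar_ready
    obtain ⟨τ', hstep, h'⟩ := hready.forward hσ
    exact ⟨τ₁, τ', hτ₁, .inl hstep, .ready hready, h'⟩
  · obtain ⟨τ₁, hτ₁, hready⟩ := h.exists_tauStar_ready
    exact ⟨τ₁, hτ₁, hready.fin_iff.2 hfin⟩
  · obtain ⟨σ', hσ', h'⟩ := h.backward hτ
    exact ⟨σ, σ', .refl, hσ', h, h'⟩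

end RTM

theorem rtm_to_queue_automaton_general {S A D : Type} [Finite S] [Finite A] [Finite D]
    (M : RTM S A D) :
    ∃ (S' D' : Type) (_ : Finite S') (_ : Finite D') (Q : QA S' A D'),
      Q.FiniteTrans ∧
      BBisimSys M.proc (M.init, [], none, []) Q.proc (Q.init, []) :=
  ⟨_, _, inferInstance, inferInstance, M.toQA, M.toQA_finiteTrans,
    RTM.SimRel M, RTM.isBBisimSys_simRel M, .start⟩

/-- For every reactive Turing machine there exists a queue
automaton whose process graph is branching bisimilar to the process graph
associated with the RTM. -/
theorem rtm_to_queue_automaton {S A D : Type} [Finite S] [Finite A] [Finite D]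
    (M : RTM S A D) (hM : M.FiniteTrans) :
    ∃ (S' D' : Type) (_ : Finite S') (_ : Finite D') (Q : QA S' A D'),
      Q.FiniteTrans ∧
      BBisimSys M.proc (M.init, [], none, []) Q.proc (Q.init, []) :=
  rtm_to_queue_automaton_general M
end

section
/- For every queue automaton there exists a reactive Turing machine whose process graph is branching bisimilar to the process graph of the queue automaton; hence a process is executable iff it is the process of a queue automaton. -/
namespace RTM

variable {D : Type}

abbrev Tape (D : Type) := List (Option D) × Option D × List (Option D)

def move (dir : Bool) (e : Option D) : Tape D → Tape D
  | (L, _, R) => if dir then (e :: L, R.headD none, R.tail) else (L.tail, L.headD none, e :: R)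

/-- The tape as seen from the head: `view t i` is the symbol `i` cells to its right. -/
def view (t : Tape D) : ℤ → Option D
  | .ofNat n => (t.2.1 :: t.2.2).getD n none
  | .negSucc n => t.1.getD n none

def moveView (dir : Bool) (e : Option D) (f : ℤ → Option D) (i : ℤ) : Option D :=
  Function.update f 0 e (if dir then i + 1 else i - 1)

theorem view_move (dir : Bool) (e : Option D) (t : Tape D) :
    view (move dir e t) = moveView dir e (view t) := by
  obtain ⟨L, c, R⟩ := t
  funext i
  cases dir
  · rcases i with (_ | _ | n) | n
    · cases L <;> rfl
    · rfl
    · have h : Int.ofNat (n + 2) - 1 = .ofNat (n + 1) := by simp; ring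
      simp only [moveView, if_neg Bool.false_ne_true, h]
      rfl
    · cases L <;> cases n <;> rfl
  · rcases i with n | (_ | n)
    · cases R <;> cases n <;> rfl
    · rfl
    · rfl

theorem proc_tr_iff_s16 {S A : Type} {M : RTM S A D} {m m' : S} {t t' : Tape D} {a : Option A} :
    M.proc.tr (m, t) a (m', t') ↔
      ∃ e dir, M.tr m a (view t 0) e dir m' ∧ t' = move dir e t := by
  obtain ⟨L, c, R⟩ := t
  obtain ⟨L', c', R'⟩ := t'
  constructor
  · rintro ⟨e, ⟨h, rfl, rfl, rfl⟩ | ⟨h, rfl, rfl, rfl⟩⟩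
    · exact ⟨e, false, h, rfl⟩
    · exact ⟨e, true, h, rfl⟩
  · rintro ⟨e, _ | _, h, h'⟩ <;>
      simp only [move, Bool.false_eq_true, ↓reduceIte, Prod.mk.injEq] at h'
    · exact ⟨e, .inl ⟨h, h'.1, h'.2.1, h'.2.2⟩⟩
    · exact ⟨e, .inr ⟨h, h'.1, h'.2.1, h'.2.2⟩⟩

end RTM

open RTM

section Layout

variable {D : Type}

/-- The list `w` written on an otherwise blank tape, seen from a head on its cell `k`. -/
def layout (w : List D) (k i : ℤ) : Option D :=
  if 0 ≤ i + k then w[(i + k).toNat]? else none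

theorem view_blank : view ([], none, []) = layout ([] : List D) 0 := by
  funext i
  rcases i with (_ | n) | n <;> simp [view, layout]

theorem layout_nil (k : ℤ) : layout ([] : List D) k = layout [] 0 := by
  funext i
  simp [layout]

theorem layout_zero_zero (w : List D) : layout w 0 0 = w.head? := by
  simp [layout, List.head?_eq_getElem?]

theorem layout_add (w : List D) (k i j : ℤ) : layout w k (i + j) = layout w (k + j) i := by
  simp only [layout, add_assoc, add_comm j k]

theorem layout_zero_eq_none_iff {w : List D} {k : ℤ} :
    layout w k 0 = none ↔ k < 0 ∨ w.length ≤ k := by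
  unfold layout
  split_ifs with hk
  · rw [List.getElem?_eq_none_iff]
    omega
  · simp only [true_iff]
    omega

theorem exists_layout_zero_eq_some_iff {w : List D} {k : ℤ} :
    (∃ d, layout w k 0 = some d) ↔ 0 ≤ k ∧ k < w.length := by
  rw [← Option.isSome_iff_exists, Option.isSome_iff_ne_none, Ne, layout_zero_eq_none_iff]
  omega

theorem moveView_layout_self (dir : Bool) (w : List D) (k : ℤ) :
    moveView dir (layout w k 0) (layout w k) = layout w (if dir then k + 1 else k - 1) := by
  funext i
  rw [moveView, Function.update_eq_self]
  cases dir
  · simp only [Bool.false_eq_true, ↓reduceIte, sub_eq_add_neg, layout_add]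
  · simp only [↓reduceIte, layout_add]

theorem moveView_layout_put (w : List D) (d : D) :
    moveView true (some d) (layout w w.length) = layout (w ++ [d]) (w.length + 1) := by
  funext i
  simp only [moveView, if_true]
  rcases eq_or_ne i (-1) with rfl | hi
  · simp [layout]
  · rw [Function.update_of_ne (by omega), layout_add]
    unfold layout
    split_ifs with h
    · have hn : (i + (w.length + 1)).toNat ≠ w.length := by omega
      rcases lt_or_gt_of_ne hn with hlt | hgt
      · rw [List.getElem?_append_left hlt]
      · rw [List.getElem?_eq_none (by omega), List.getElem?_eq_none (by simp; omega)]
    · rfl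

theorem moveView_layout_erase (w : List D) (d : D) :
    moveView true none (layout (d :: w) 0) = layout w 0 := by
  funext i
  simp only [moveView, if_true]
  rcases eq_or_ne i (-1) with rfl | hi
  · simp [layout]
  · rw [Function.update_of_ne (by omega)]
    unfold layout
    rcases lt_or_gt_of_ne hi with hlt | hgt
    · rw [if_neg (by omega), if_neg (by omega)]
    · rw [if_pos (by omega), if_pos (by omega),
        show (i + 1 + 0).toNat = (i + 0).toNat + 1 by omega]
      rfl

end Layout

namespace Head

variable {D : Type}

def Admits : Head D → Option D → Prop
  | .emp, c => c = none
  | .star, _ => True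
  | .data d, c => c = some d

def consume : Head D → Option D → Option D
  | .data _, _ => none
  | _, c => c

end Head

namespace QA

variable {S A D : Type}

theorem FiniteTrans.exists_length_le {Q : QA S A D} (hQ : Q.FiniteTrans) :
    ∃ N, ∀ s a h δ s', Q.tr s a h δ s' → δ.length ≤ N := by
  obtain ⟨N, hN⟩ := (hQ.image fun x => x.2.2.2.1.length).bddAbove
  exact ⟨N, fun s a h δ s' ht => hN ⟨(s, a, h, δ, s'), ht, rfl⟩⟩

theorem qStep_iff_admits {h : Head D} {δ l : List D} :
    (∃ l', QStep h δ l l') ↔ h.Admits l.getLast? := by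
  constructor
  · rintro ⟨l', (_ | _ | _)⟩ <;> simp [Head.Admits]
  · cases h with
    | emp =>
      intro hl
      rw [Head.Admits, List.getLast?_eq_none_iff] at hl
      exact ⟨δ, hl ▸ .emp δ⟩
    | star => exact fun _ => ⟨_, .star δ l⟩
    | data d =>
      intro hl
      obtain ⟨ζ, rfl⟩ := List.getLast?_eq_some_iff.1 hl
      exact ⟨_, .data d δ ζ⟩

/-- Control phases of the simulating RTM: resting on the front of the queue, walking right
and appending `σ`, walking back to the front. -/
inductive Phase (D : Type) (N : ℕ) where
  | ready
  | append (σ : List D) (h : σ.length ≤ N)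
  | rewind

instance {N : ℕ} [Finite D] : Finite (Phase D N) :=
  have : Finite {σ : List D // σ.length ≤ N} := (List.finite_length_le D N).to_subtype
  Finite.of_injective
    (fun μ : Phase D N => match μ with
      | .ready => (none : Option (Option {σ : List D // σ.length ≤ N}))
      | .append σ h => some (some ⟨σ, h⟩)
      | .rewind => some none)
    (by rintro (_ | _ | _) (_ | _ | _) h <;> simp_all)

inductive Shuttle {N : ℕ} : Phase D N → Option D → Option D → Bool → Phase D N → Prop
  | skip {σ h d} : Shuttle (.append σ h) (some d) (some d) true (.append σ h)
  | put {d σ h} :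
      Shuttle (.append (d :: σ) h) none (some d) true (.append σ (Nat.le_of_succ_le h))
  | turn {h} : Shuttle (.append [] h) none none false .rewind
  | back {d} : Shuttle .rewind (some d) (some d) false .rewind
  | home : Shuttle .rewind none none true .ready

inductive Step (Q : QA S A D) (N : ℕ) :
    S × Phase D N → Option A → Option D → Option D → Bool → S × Phase D N → Prop
  | act {s a h δ s' c} (ht : Q.tr s a h δ s') (hc : h.Admits c) (hδ : δ.reverse.length ≤ N) :
      Step Q N (s, .ready) a c (h.consume c) true (s', .append δ.reverse hδ)
  | shuttle {s μ c e dir μ'} (hμ : Shuttle μ c e dir μ') :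
      Step Q N (s, μ) none c e dir (s, μ')

def toRTM (Q : QA S A D) (N : ℕ) : RTM (S × Phase D N) A D where
  tr := Step Q N
  init := (Q.init, .ready)
  fin m := Q.fin m.1

/-- The tape view `f` fits phase `μ` of the simulation of the queue `q`, listed front first. -/
def Phase.Shows {N : ℕ} : Phase D N → List D → (ℤ → Option D) → Prop
  | .ready, q, f => f = layout q 0
  | .append σ _, q, f => ∃ w k, q = w ++ σ ∧ f = layout w k ∧ 0 ≤ k ∧ k ≤ w.length
  | .rewind, q, f => ∃ k, f = layout q k ∧ -1 ≤ k ∧ k < q.length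

theorem Phase.Shows.shuttle {N : ℕ} {μ μ' : Phase D N} {e : Option D} {dir : Bool}
    {q : List D} {f : ℤ → Option D} (hμ : Shuttle μ (f 0) e dir μ') (hf : μ.Shows q f) :
    μ'.Shows q (moveView dir e f) := by
  generalize hc : f 0 = c at hμ
  cases hμ with
  | skip =>
    obtain ⟨w, k, rfl, rfl, hk0, -⟩ := hf
    have hk := exists_layout_zero_eq_some_iff.1 ⟨_, hc⟩
    exact ⟨w, k + 1, rfl, by rw [← hc, moveView_layout_self]; rfl, by omega, by omega⟩
  | put =>
    obtain ⟨w, k, rfl, rfl, hk0, hkw⟩ := hf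
    obtain rfl : k = w.length := by have := layout_zero_eq_none_iff.1 hc; omega
    exact ⟨w ++ [_], w.length + 1, by simp, moveView_layout_put w _, by omega, by simp⟩
  | turn =>
    obtain ⟨w, k, rfl, rfl, hk0, hkw⟩ := hf
    obtain rfl : k = w.length := by have := layout_zero_eq_none_iff.1 hc; omega
    exact ⟨w.length - 1, by rw [← hc, moveView_layout_self]; simp, by omega, by simp⟩
  | back =>
    obtain ⟨k, rfl, hk1, hkq⟩ := hf
    have hk := exists_layout_zero_eq_some_iff.1 ⟨_, hc⟩
    exact ⟨k - 1, by rw [← hc, moveView_layout_self]; rfl, by omega, by omega⟩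
  | home =>
    obtain ⟨k, rfl, hk1, hkq⟩ := hf
    obtain rfl : k = -1 := by have := layout_zero_eq_none_iff.1 hc; omega
    show _ = _
    rw [← hc, moveView_layout_self]
    simp

theorem _root_.QStep.shows_append {N : ℕ} {h : Head D} {δ l l' : List D}
    (hl : QStep h δ l l') (hδ : δ.reverse.length ≤ N) :
    (Phase.append δ.reverse hδ).Shows l'.reverse
      (moveView true (h.consume l.getLast?) (layout l.reverse 0)) := by
  cases hl with
  | emp =>
    refine ⟨[], 0, by simp, ?_, le_rfl, le_rfl⟩
    rw [List.reverse_nil, show Head.consume .emp ([] : List D).getLast? = layout [] 0 0 from rfl,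
      moveView_layout_self]
    exact layout_nil _
  | star =>
    rw [show Head.consume .star l.getLast? = layout l.reverse 0 0 by
      simp [Head.consume, layout_zero_zero], moveView_layout_self]
    rcases hl : l.reverse with _ | ⟨d, ζ⟩
    · exact ⟨[], 0, by simp [hl], layout_nil _, le_rfl, le_rfl⟩
    · exact ⟨d :: ζ, 1, by simp [hl], rfl, zero_le_one, by simp⟩
  | data d _ ζ =>
    refine ⟨ζ.reverse, 0, by simp, ?_, le_rfl, by simp⟩
    simpa [Head.consume] using moveView_layout_erase ζ.reverse d

section Paths

variable {Q : QA S A D} {N : ℕ}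

theorem proc_tr_shuttle {s : S} {μ μ' : Phase D N} {e : Option D} {dir : Bool} {t : Tape D}
    (hμ : Shuttle μ (view t 0) e dir μ') :
    (toRTM Q N).proc.tr ((s, μ), t) none ((s, μ'), move dir e t) :=
  proc_tr_iff_s16.2 ⟨e, dir, .shuttle hμ, rfl⟩

theorem exists_tauStar_ready_of_rewind (s : S) {q : List D} {t : Tape D}
    (ht : (Phase.rewind : Phase D N).Shows q (view t)) :
    ∃ t', (toRTM Q N).proc.tauStar ((s, .rewind), t) ((s, .ready), t') ∧
      view t' = layout q 0 := by
  obtain ⟨k, ht, hk1, hkq⟩ := ht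
  obtain ⟨n, rfl⟩ : ∃ n : ℕ, k = n - 1 := ⟨(k + 1).toNat, by omega⟩
  clear hk1
  induction n generalizing t with
  | zero =>
    have h0 : view t 0 = none := by rw [ht, layout_zero_eq_none_iff]; omega
    refine ⟨_, .single (proc_tr_shuttle (by rw [h0]; exact .home)), ?_⟩
    rw [view_move, ← h0, ht, moveView_layout_self]
    simp
  | succ n ih =>
    obtain ⟨d, hd⟩ : ∃ d, view t 0 = some d := by
      rw [ht]
      exact exists_layout_zero_eq_some_iff.2 ⟨by omega, hkq⟩
    obtain ⟨t', hτ, ht'⟩ := ih (t := move false (some d) t)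
      (by rw [view_move, ← hd, ht, moveView_layout_self]; simp) (by omega)
    exact ⟨t', .head (proc_tr_shuttle (by rw [hd]; exact .back)) hτ, ht'⟩

theorem exists_tauStar_rewind_of_end (s : S) :
    ∀ (σ : List D) (hσ : σ.length ≤ N) (w : List D) (t : Tape D),
      view t = layout w w.length →
      ∃ t', (toRTM Q N).proc.tauStar ((s, .append σ hσ), t) ((s, .rewind), t') ∧
        (Phase.rewind : Phase D N).Shows (w ++ σ) (view t')
  | [], hσ, w, t, ht => by
    have h0 : view t 0 = none := by rw [ht, layout_zero_eq_none_iff]; omega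
    refine ⟨_, .single (proc_tr_shuttle (by rw [h0]; exact .turn)), w.length - 1, ?_, by omega,
      by simp⟩
    rw [view_move, ← h0, ht, moveView_layout_self]
    simp
  | d :: σ, hσ, w, t, ht => by
    have h0 : view t 0 = none := by rw [ht, layout_zero_eq_none_iff]; omega
    obtain ⟨t', hτ, ht'⟩ := exists_tauStar_rewind_of_end s σ (Nat.le_of_succ_le hσ)
      (w ++ [d]) (move true (some d) t) (by rw [view_move, ht, moveView_layout_put]; simp)
    exact ⟨t', .head (proc_tr_shuttle (by rw [h0]; exact .put)) hτ, by simpa using ht'⟩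

theorem exists_tauStar_rewind_of_append (s : S) {σ : List D} {hσ : σ.length ≤ N} {q : List D}
    {t : Tape D} (ht : (Phase.append σ hσ).Shows q (view t)) :
    ∃ t', (toRTM Q N).proc.tauStar ((s, .append σ hσ), t) ((s, .rewind), t') ∧
      (Phase.rewind : Phase D N).Shows q (view t') := by
  obtain ⟨w, k, rfl, ht, hk0, hkw⟩ := ht
  obtain ⟨n, rfl⟩ : ∃ n : ℕ, k = w.length - n := ⟨(w.length - k).toNat, by omega⟩
  clear hkw
  induction n generalizing t with
  | zero => exact exists_tauStar_rewind_of_end s σ hσ w t (by simpa using ht)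
  | succ n ih =>
    obtain ⟨d, hd⟩ : ∃ d, view t 0 = some d := by
      rw [ht]
      exact exists_layout_zero_eq_some_iff.2 ⟨hk0, by omega⟩
    obtain ⟨t', hτ, ht'⟩ := ih (t := move true (some d) t)
      (by rw [view_move, ← hd, ht, moveView_layout_self]; push_cast; ring_nf; rfl) (by omega)
    exact ⟨t', .head (proc_tr_shuttle (by rw [hd]; exact .skip)) hτ, ht'⟩

theorem exists_tauStar_ready (s : S) (μ : Phase D N) {q : List D} {t : Tape D}
    (ht : μ.Shows q (view t)) :
    ∃ t', (toRTM Q N).proc.tauStar ((s, μ), t) ((s, .ready), t') ∧ view t' = layout q 0 := by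
  cases μ with
  | ready => exact ⟨t, .refl, ht⟩
  | append σ hσ =>
    obtain ⟨t₁, hτ₁, ht₁⟩ := exists_tauStar_rewind_of_append s ht
    obtain ⟨t₂, hτ₂, ht₂⟩ := exists_tauStar_ready_of_rewind s ht₁
    exact ⟨t₂, hτ₁.trans hτ₂, ht₂⟩
  | rewind => exact exists_tauStar_ready_of_rewind s ht

end Paths

def SimRel (N : ℕ) (p : S × List D) (c : (S × Phase D N) × Tape D) : Prop :=
  c.1.1 = p.1 ∧ c.1.2.Shows p.2.reverse (view c.2)

theorem isBBisimSys_toRTM {Q : QA S A D} {N : ℕ}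
    (hN : ∀ s a h δ s', Q.tr s a h δ s' → δ.length ≤ N) :
    IsBBisimSys Q.proc (toRTM Q N).proc (SimRel N) := by
  refine .of_forward_backward ?_ ?_ ?_
  · rintro ⟨_, l⟩ ⟨⟨s, μ⟩, t⟩ ⟨rfl, hμ⟩ a ⟨s', l'⟩ ⟨h, δ, ht, hl⟩
    obtain ⟨t₁, hτ, ht₁⟩ := exists_tauStar_ready s μ hμ
    have hc : view t₁ 0 = l.getLast? := by rw [ht₁, layout_zero_zero, List.head?_reverse]
    have hδ : δ.reverse.length ≤ N := by simpa using hN _ _ _ _ _ ht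
    have hadm : h.Admits (view t₁ 0) := hc ▸ qStep_iff_admits.1 ⟨_, hl⟩
    refine ⟨_, _, hτ, proc_tr_iff_s16.2 ⟨_, _, .act ht hadm hδ, rfl⟩, ⟨rfl, ht₁⟩, rfl,
      ?_⟩
    rw [view_move, hc, ht₁]
    exact hl.shows_append hδ
  · rintro ⟨_, l⟩ ⟨⟨s, μ⟩, t⟩ ⟨rfl, hμ⟩ a ⟨⟨s', μ'⟩, t'⟩ hstep
    obtain ⟨e, dir, htr, rfl⟩ := proc_tr_iff_s16.1 hstep
    generalize hc : view t 0 = c at htr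
    change Step Q N (s, μ) a c e dir (s', μ') at htr
    cases htr with
    | act ht hadm hδ =>
      have hc' : c = l.getLast? := by rw [← hc, hμ, layout_zero_zero, List.head?_reverse]
      subst hc'
      obtain ⟨l', hl⟩ := qStep_iff_admits.2 hadm
      refine .inr ⟨(s', l'), ⟨_, _, ht, hl⟩, rfl, ?_⟩
      rw [view_move, hμ]
      exact hl.shows_append hδ
    | shuttle hs =>
      subst hc
      exact .inl ⟨rfl, rfl, by rw [view_move]; exact hμ.shuttle hs⟩
  · rintro ⟨_, l⟩ ⟨⟨s, μ⟩, t⟩ ⟨rfl, -⟩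
    exact Iff.rfl

end QA

/-- For every queue automaton there exists a reactive Turing
machine whose process graph is branching bisimilar to the process graph of
the queue automaton (hence a process is executable iff it is the process of a
queue automaton). -/
theorem queue_automaton_to_rtm {S A D : Type} [Finite S] [Finite A] [Finite D]
    (Q : QA S A D) (hQ : Q.FiniteTrans) :
    ∃ (S' D' : Type) (_ : Finite S') (_ : Finite D') (M : RTM S' A D'),
      M.FiniteTrans ∧
      BBisimSys Q.proc (Q.init, []) M.proc (M.init, [], none, []) := by
  obtain ⟨N, hN⟩ := hQ.exists_length_le
  exact ⟨S × QA.Phase D N, D, inferInstance, inferInstance, QA.toRTM Q N, Set.toFinite _,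
    QA.SimRel N, QA.isBBisimSys_toRTM hN, rfl, view_blank⟩
end

section
/- The process graph of the queue automaton of Figure 6 (with transitions s0 →τ[*/1] s0, s0 →τ[1/ε] s0, s0 →a[1/ε] s1, s1 →a[1/ε] s1, s1 →τ[ε/ε] s2, with s2 final) is branching bisimilar to an infinitely branching process graph; in particular, for every n ≥ 1 the state (s1, 1ⁿ) can be reached from the initial state by τ-steps followed by one a-step, and the states (s1, 1ⁿ) are pairwise not branching bisimilar. -/
inductive StInf where
  | s0 : StInf
  | s1 : StInf
  | s2 : StInf

/-- Transitions of the queue automaton of Figure 6 (single action `a = ()`,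
single datum `1 = ()`). -/
inductive infTr : StInf → Option Unit → Head Unit → List Unit → StInf → Prop
  | enq : infTr StInf.s0 none Head.star [()] StInf.s0
  | deq : infTr StInf.s0 none (Head.data ()) [] StInf.s0
  | go : infTr StInf.s0 (some ()) (Head.data ()) [] StInf.s1
  | loop : infTr StInf.s1 (some ()) (Head.data ()) [] StInf.s1
  | done : infTr StInf.s1 none Head.emp [] StInf.s2

/-- The queue automaton of Figure 6. -/
def infQA : QA StInf Unit Unit :=
  { tr := infTr, init := StInf.s0, fin := fun s => s = StInf.s2 }

lemma unit_list (l : List Unit) : l = List.replicate l.length () := by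
  induction l with
  | nil => rfl
  | cons h t ih =>
    cases h
    simp only [List.length_cons, List.replicate_succ]
    exact congrArg (List.cons ()) ih

lemma s1_no_tau {q : List Unit} (hq : q ≠ []) {c' : StInf × List Unit} :
    ¬ infQA.proc.tr (StInf.s1, q) none c' := by
  obtain ⟨t, q'⟩ := c'
  rintro ⟨h, δ, htr, hstep⟩
  cases htr
  cases hstep
  exact hq rfl

lemma s1_tauStar {q : List Unit} (hq : q ≠ []) {c : StInf × List Unit}
    (h : infQA.proc.tauStar (StInf.s1, q) c) : c = (StInf.s1, q) := by
  rcases Relation.ReflTransGen.cases_head h with rfl | ⟨c', hstep, _⟩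
  · rfl
  · exact absurd hstep (s1_no_tau hq)

lemma s1_a_step {q : List Unit} {c' : StInf × List Unit}
    (h : infQA.proc.tr (StInf.s1, q) (some ()) c') :
    ∃ ζ, q = ζ ++ [()] ∧ c' = (StInf.s1, ζ) := by
  obtain ⟨t, q'⟩ := c'
  obtain ⟨h, δ, htr, hstep⟩ := h
  cases htr
  cases hstep
  rename_i d
  cases d
  exact ⟨q', rfl, rfl⟩

lemma key0 {R : StInf × List Unit → StInf × List Unit → Prop}
    (hR : IsBranchingBisim infQA.proc R) (k : ℕ) :
    ¬ R (StInf.s1, []) (StInf.s1, List.replicate (k+1) ()) := by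
  intro hr
  have hne : (List.replicate (k+1) () : List Unit) ≠ [] := by simp
  have hτ : infQA.proc.tr (StInf.s1, ([] : List Unit)) none (StInf.s2, []) :=
    ⟨Head.emp, [], infTr.done, QStep.emp []⟩
  obtain ⟨t'', t', hts, hopt, _, hr'⟩ := (hR.2 _ _ hr).1 none _ hτ
  have ht'' := s1_tauStar hne hts
  subst ht''
  have ht' : t' = (StInf.s1, List.replicate (k+1) ()) := by
    rcases hopt with htr | ⟨_, ht⟩
    · exact absurd htr (s1_no_tau hne)
    · exact ht.symm
  subst ht'
  have hfin : infQA.proc.fin (StInf.s2, ([] : List Unit)) := rfl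
  obtain ⟨t0, hts0, hfin0⟩ := (hR.2 _ _ hr').2 hfin
  have := s1_tauStar hne hts0
  subst this
  cases hfin0

lemma key {R : StInf × List Unit → StInf × List Unit → Prop}
    (hR : IsBranchingBisim infQA.proc R) :
    ∀ n m, R (StInf.s1, List.replicate n ()) (StInf.s1, List.replicate m ()) → n = m := by
  intro n
  induction n with
  | zero =>
    intro m hr
    cases m with
    | zero => rfl
    | succ j => exact absurd hr (key0 hR j)
  | succ k ih =>
    intro m hr
    cases m with
    | zero => exact absurd (hR.1 _ _ hr) (key0 hR k)
    | succ j =>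
      have hstep : infQA.proc.tr (StInf.s1, List.replicate (k+1) ()) (some ())
          (StInf.s1, List.replicate k ()) := by
        refine ⟨Head.data (), [], infTr.loop, ?_⟩
        have := QStep.data () [] (List.replicate k ())
        simpa [List.replicate_succ'] using this
      obtain ⟨t'', t', hts, hopt, _, hr'⟩ := (hR.2 _ _ hr).1 _ _ hstep
      have ht'' : t'' = (StInf.s1, List.replicate (j+1) ()) := s1_tauStar (by simp) hts
      subst ht''
      rcases hopt with htr | ⟨hne, _⟩
      · obtain ⟨ζ, hζ, rfl⟩ := s1_a_step htr
        have hlen : ζ.length = j := by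
          have := congrArg List.length hζ
          simp at this
          omega
        have hζ' : ζ = List.replicate j () := by rw [← hlen]; exact unit_list ζ
        rw [hζ'] at hr'
        exact congrArg (· + 1) (ih j hr')
      · cases hne

lemma reach (k : ℕ) :
    infQA.proc.tauStar (StInf.s0, []) (StInf.s0, List.replicate k ()) := by
  induction k with
  | zero => exact Relation.ReflTransGen.refl
  | succ j ih =>
    refine ih.tail ?_
    refine ⟨Head.star, [()], infTr.enq, ?_⟩
    have := QStep.star [()] (List.replicate j ())
    simpa [List.replicate_succ] using this

/-- For every `n ≥ 1` the state `(s1, 1ⁿ)` is reachable from the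
initial state by τ-steps followed by one `a`-step, and the states `(s1, 1ⁿ)`
are pairwise not branching bisimilar; hence the process graph is branching
bisimilar to an infinitely branching process graph. -/
theorem infQA_infinitely_branching :
    (∀ n : ℕ, 1 ≤ n → ∃ c, infQA.proc.tauStar (infQA.init, []) c ∧
        infQA.proc.tr c (some ()) (StInf.s1, List.replicate n ())) ∧
    (∀ n m : ℕ, 1 ≤ n → 1 ≤ m → n ≠ m →
        ¬ BBisim infQA.proc (StInf.s1, List.replicate n ())
            (StInf.s1, List.replicate m ())) := by
  constructor
  · intro n hn
    refine ⟨(StInf.s0, List.replicate (n+1) ()), reach (n+1), ?_⟩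
    refine ⟨Head.data (), [], infTr.go, ?_⟩
    have := QStep.data () [] (List.replicate n ())
    simpa [List.replicate_succ'] using this
  · rintro n m hn hm hne ⟨R, hR, hr⟩
    exact hne (key hR n m hr)
end
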